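/- arXiv:2012.11017 — 11 statements merged into one kernel-verified Lean document; each statement's English description precedes it below -/
import Mathlib

section
/- Let U be a real Banach space, H a real Hilbert space, F : U → H a bounded linear operator, and h : U → ℝ ∪ {+∞} a proper convex functional. Let y ∈ H, δ > 0, and y^δ ∈ H with ‖y − y^δ‖ ≤ δ. Let ū be an h-minimizing solution of F u = y, and suppose there is ω ∈ H such that the functional ξ = F*ω (i.e. ξ(v) = ⟨ω, F v⟩ for all v ∈ U) is a subgradient of h at ū. Then for every α > 0 and every global minimizer u_α^δ of the Tikhonov functional J_α(u) = (1/2)‖F u − y^δ‖² + α h(u), the Bregman distance satisfies D_{F*ω}(u_α^δ, ū) ≤ (α‖ω‖ + δ)² / (2α). -/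
open scoped RealInnerProductSpace

noncomputable section

/-- `ξ ∈ ∂h(u)`: `ξ` is a subgradient of the extended-real-valued functional `h` at `u`. -/
def IsSubgradientAt {U : Type*} [NormedAddCommGroup U] [NormedSpace ℝ U]
    (h : U → EReal) (ξ : U →L[ℝ] ℝ) (u : U) : Prop :=
  ∀ v, h u + ((ξ (v - u) : ℝ) : EReal) ≤ h v

/-- Bregman distance `D_ξ(v, u) = h(v) - h(u) - ⟨ξ, v - u⟩`. -/
def bregman {U : Type*} [NormedAddCommGroup U] [NormedSpace ℝ U]
    (h : U → EReal) (ξ : U →L[ℝ] ℝ) (v u : U) : EReal :=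
  h v - h u - ((ξ (v - u) : ℝ) : EReal)

/-- `h` is a proper convex functional with values in `ℝ ∪ {+∞}`. -/
def ProperConvex {U : Type*} [NormedAddCommGroup U] [NormedSpace ℝ U]
    (h : U → EReal) : Prop :=
  (∀ u, h u ≠ ⊥) ∧ (∃ u, h u ≠ ⊤) ∧
    ∀ u v : U, ∀ t : ℝ, 0 ≤ t → t ≤ 1 →
      h (t • u + (1 - t) • v) ≤ ((t : ℝ) : EReal) * h u + (((1 - t) : ℝ) : EReal) * h v

/-- stability of linear Tikhonov regularization under the
source condition of type I (`F* ω ∈ ∂h(ū)`). -/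
theorem tikhonov_linear_stability_typeI
    {U H : Type*} [NormedAddCommGroup U] [NormedSpace ℝ U] [CompleteSpace U]
    [NormedAddCommGroup H] [InnerProductSpace ℝ H] [CompleteSpace H]
    (F : U →L[ℝ] H) (h : U → EReal) (hP : ProperConvex h)
    (y yδ : H) (δ : ℝ) (hδ : 0 < δ) (hnoise : ‖y - yδ‖ ≤ δ)
    (ubar : U) (hub : F ubar = y) (hubmin : ∀ u, F u = y → h ubar ≤ h u)
    (ω : H) (ξ : U →L[ℝ] ℝ) (hξω : ∀ v, ξ v = ⟪ω, F v⟫)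
    (hξ : IsSubgradientAt h ξ ubar)
    (α : ℝ) (hα : 0 < α) (uαδ : U)
    (hmin : ∀ u : U,
      (((1 / 2) * ‖F uαδ - yδ‖ ^ 2 : ℝ) : EReal) + ((α : ℝ) : EReal) * h uαδ ≤
      (((1 / 2) * ‖F u - yδ‖ ^ 2 : ℝ) : EReal) + ((α : ℝ) : EReal) * h u) :
    bregman h ξ uαδ ubar ≤ (((α * ‖ω‖ + δ) ^ 2 / (2 * α) : ℝ) : EReal) := by

  obtain ⟨hbot, ⟨u0, hu0⟩, _⟩ := hP
  have hb_top : h ubar ≠ ⊤ := by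
    intro htop
    have h1 := hξ u0
    rw [htop, EReal.top_add_coe] at h1
    exact hu0 (top_le_iff.mp h1)
  set b : ℝ := (h ubar).toReal with hbdef
  have hb : h ubar = (b : EReal) := (EReal.coe_toReal hb_top (hbot ubar)).symm
  have H1 := hmin ubar
  rw [hub, hb] at H1
  have ha_top : h uαδ ≠ ⊤ := by
    intro htop
    rw [htop] at H1
    rw [EReal.coe_mul_top_of_pos hα, EReal.add_top_of_ne_bot (EReal.coe_ne_bot _)] at H1
    rw [← EReal.coe_mul, ← EReal.coe_add] at H1
    exact EReal.coe_ne_top _ (top_le_iff.mp H1)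
  set a : ℝ := (h uαδ).toReal with hadef
  have ha : h uαδ = (a : EReal) := (EReal.coe_toReal ha_top (hbot uαδ)).symm
  rw [ha] at H1
  rw [← EReal.coe_mul, ← EReal.coe_add, ← EReal.coe_mul, ← EReal.coe_add] at H1
  have Hreal : (1/2) * ‖F uαδ - yδ‖^2 + α * a ≤ (1/2) * ‖y - yδ‖^2 + α * b :=
    EReal.coe_le_coe_iff.mp H1
  have hbreg : bregman h ξ uαδ ubar = ((a - b - ξ (uαδ - ubar) : ℝ) : EReal) := by
    rw [bregman, ha, hb, ← EReal.coe_sub, ← EReal.coe_sub]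
  rw [hbreg, EReal.coe_le_coe_iff]
  have hξval : ξ (uαδ - ubar) = ⟪ω, F uαδ - yδ⟫ - ⟪ω, y - yδ⟫ := by
    simp only [hξω, map_sub, hub, inner_sub_right]
    ring
  rw [hξval]
  set r : H := F uαδ - yδ
  set e : H := y - yδ
  have hCS1 : -(‖ω‖ * ‖r‖) ≤ ⟪ω, r⟫ := (abs_le.mp (abs_real_inner_le_norm ω r)).1
  have hCS2 : ⟪ω, e⟫ ≤ ‖ω‖ * ‖e‖ := real_inner_le_norm ω e
  have hne : ‖e‖ ≤ δ := hnoise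
  have hr0 : (0:ℝ) ≤ ‖r‖ := norm_nonneg r
  have hw0 : (0:ℝ) ≤ ‖ω‖ := norm_nonneg ω
  rw [le_div_iff₀ (by positivity)]
  have h2α : (0:ℝ) ≤ 2 * α := by linarith
  nlinarith [sq_nonneg (‖r‖ - α * ‖ω‖),
    mul_le_mul_of_nonneg_left Hreal h2α,
    mul_le_mul_of_nonneg_left hCS1 h2α,
    mul_le_mul_of_nonneg_left hCS2 h2α,
    mul_le_mul hne hne (norm_nonneg e) hδ.le,
    mul_le_mul_of_nonneg_left hne (mul_nonneg h2α hw0)]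
end
end

section
/- Let U be a real Banach space, H a real Hilbert space, F : U → H a bounded linear operator, and h : U → ℝ ∪ {+∞} a proper convex functional. Let ū be an h-minimizing solution of F u = y, and suppose there is ω ∈ H such that ξ = F*ω (i.e. ξ(v) = ⟨ω, F v⟩) is a subgradient of h at ū. Then for every α > 0 and every global minimizer u_α of the functional u ↦ (1/2)‖F u − y‖² + α h(u) (exact data), the Bregman distance satisfies D_{F*ω}(u_α, ū) ≤ (α/2)‖ω‖². -/
open scoped RealInnerProductSpace

noncomputable section

/-- convergence of linear Tikhonov regularization with exact data
under the source condition of type I (`F* ω ∈ ∂h(ū)`). -/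
theorem tikhonov_linear_convergence_typeI
    {U H : Type*} [NormedAddCommGroup U] [NormedSpace ℝ U] [CompleteSpace U]
    [NormedAddCommGroup H] [InnerProductSpace ℝ H] [CompleteSpace H]
    (F : U →L[ℝ] H) (h : U → EReal) (hP : ProperConvex h)
    (y : H)
    (ubar : U) (hub : F ubar = y) (hubmin : ∀ u, F u = y → h ubar ≤ h u)
    (ω : H) (ξ : U →L[ℝ] ℝ) (hξω : ∀ v, ξ v = ⟪ω, F v⟫)
    (hξ : IsSubgradientAt h ξ ubar)
    (α : ℝ) (hα : 0 < α) (uα : U)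
    (hmin : ∀ u : U,
      (((1 / 2) * ‖F uα - y‖ ^ 2 : ℝ) : EReal) + ((α : ℝ) : EReal) * h uα ≤
      (((1 / 2) * ‖F u - y‖ ^ 2 : ℝ) : EReal) + ((α : ℝ) : EReal) * h u) :
    bregman h ξ uα ubar ≤ ((α / 2 * ‖ω‖ ^ 2 : ℝ) : EReal) := by
  by_cases htop : h ubar = ⊤
  · simp [bregman, htop, EReal.sub_top, EReal.bot_sub]
  · obtain ⟨b, hb⟩ : ∃ b : ℝ, h ubar = (b : EReal) := by
      lift h ubar to ℝ using ⟨htop, hP.1 ubar⟩ with b hb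
      exact ⟨b, rfl⟩
    have hmin' := hmin ubar
    rw [hub, hb] at hmin'
    simp only [sub_self, norm_zero] at hmin'
    -- show h uα is a real number
    have hne : h uα ≠ ⊥ := hP.1 uα
    have hr2 : (0:ℝ) ≤ (1 / 2) * ‖F uα - y‖ ^ 2 := by positivity
    have hle : ((α : ℝ) : EReal) * h uα ≤ ((α * b : ℝ) : EReal) := by
      calc ((α : ℝ) : EReal) * h uα
          ≤ (((1 / 2) * ‖F uα - y‖ ^ 2 : ℝ) : EReal) + ((α : ℝ) : EReal) * h uα := by
            apply le_add_of_nonneg_left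
            exact_mod_cast hr2
        _ ≤ _ := by
            convert hmin' using 2 <;> first
              | norm_num
              | rw [← EReal.coe_mul]
    have hαtop : h uα ≠ ⊤ := by
      intro hh
      rw [hh] at hle
      rw [EReal.mul_top_of_pos (by exact_mod_cast hα)] at hle
      exact (EReal.coe_lt_top _).not_ge hle
    obtain ⟨a, ha⟩ : ∃ a : ℝ, h uα = (a : EReal) := by
      lift h uα to ℝ using ⟨hαtop, hne⟩ with a ha
      exact ⟨a, rfl⟩
    rw [ha] at hle hmin'
    rw [← EReal.coe_mul] at hle
    have hab : α * a ≤ α * b := EReal.coe_le_coe_iff.mp hle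
    have hmr : (1 / 2) * ‖F uα - y‖ ^ 2 + α * a ≤ 1/2 * 0^2 + α * b := by
      have := hmin'
      rw [← EReal.coe_mul, ← EReal.coe_mul, ← EReal.coe_add, ← EReal.coe_add] at this
      exact_mod_cast this
    -- reduce goal to reals
    rw [bregman, ha, hb]
    rw [show ((a:EReal) - (b:EReal) - ((ξ (uα - ubar) : ℝ) : EReal)) = ((a - b - ξ (uα - ubar) : ℝ) : EReal) by
      rw [EReal.coe_sub, EReal.coe_sub]]
    rw [EReal.coe_le_coe_iff]
    have hxi : ξ (uα - ubar) = ⟪ω, F uα - y⟫ := by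
      rw [hξω, map_sub, hub]
    rw [hxi]
    have hinner : -⟪ω, F uα - y⟫ ≤ ‖ω‖ * ‖F uα - y‖ := by
      have := abs_real_inner_le_norm ω (F uα - y)
      have h2 := neg_abs_le ⟪ω, F uα - y⟫
      linarith [h2, this]
    set r := ‖F uα - y‖ with hrdef
    have hr0 : 0 ≤ r := norm_nonneg _
    have hw0 : 0 ≤ ‖ω‖ := norm_nonneg _
    nlinarith [sq_nonneg (r - α * ‖ω‖), mul_pos hα hα]
end
end

section
/- Let U be a real Banach space, H a real Hilbert space, F : U → H a bounded linear operator, and h : U → ℝ ∪ {+∞} a proper convex functional. Let y ∈ H, δ > 0, and y^δ ∈ H with ‖y − y^δ‖ ≤ δ. Let ū be a least-squares solution, i.e. ⟨F ū − y, F v⟩ = 0 for all v ∈ U, and suppose there is ω ∈ U such that ξ = F*F ω (i.e. ξ(v) = ⟨F ω, F v⟩ for all v ∈ U) is a subgradient of h at ū. Set s = D_ξ(ū − αω, ū) (assuming h(ū − αω) < ∞). Then for every α > 0 and every global minimizer u_α^δ of J_α(u) = (1/2)‖F u − y^δ‖² + α h(u), the following two estimates hold: D_ξ(u_α^δ, ū)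 ≤ s + δ²/α + (δ/α)·√(δ² + 2αs), and ‖F u_α^δ − F ū‖ ≤ α‖F ω‖ + δ + √(δ² + 2αs). -/
open scoped RealInnerProductSpace

noncomputable section

private lemma key_identity {H : Type*} [NormedAddCommGroup H] [InnerProductSpace ℝ H]
    (p q e w : H) (α : ℝ) (hqp : ⟪q, p⟫ = 0) (hqw : ⟪q, w⟫ = 0) :
    (1/2)*‖p + q + e‖^2 = (1/2)*‖q + e - α•w‖^2 - α^2*‖w‖^2 - α*⟪w,p⟫
      + (1/2)*‖p + α•w‖^2 + ⟪p + α•w, e⟫ := by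
  have c1 : ⟪e, p⟫ = ⟪p, e⟫ := real_inner_comm p e
  have c2 : ⟪p, q⟫ = ⟪q, p⟫ := real_inner_comm q p
  have c3 : ⟪w, q⟫ = ⟪q, w⟫ := real_inner_comm q w
  have c4 : ⟪e, w⟫ = ⟪w, e⟫ := real_inner_comm w e
  have c5 : ⟪w, p⟫ = ⟪p, w⟫ := real_inner_comm p w
  simp only [← real_inner_self_eq_norm_sq, inner_add_left, inner_add_right,
    inner_sub_left, inner_sub_right, real_inner_smul_left, real_inner_smul_right]
  linear_combination hqp + (1/2:ℝ)*c1 + (1/2:ℝ)*c2 + (α/2)*c3 + α*hqw + (α/2)*c4 + (α/2)*c5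

/-- stability of linear Tikhonov regularization under the
source condition of type II (`F*F ω ∈ ∂h(ū)`, `ū` a least-squares solution). -/
theorem tikhonov_linear_stability_typeII
    {U H : Type*} [NormedAddCommGroup U] [NormedSpace ℝ U] [CompleteSpace U]
    [NormedAddCommGroup H] [InnerProductSpace ℝ H] [CompleteSpace H]
    (F : U →L[ℝ] H) (h : U → EReal) (hP : ProperConvex h)
    (y yδ : H) (δ : ℝ) (hδ : 0 < δ) (hnoise : ‖y - yδ‖ ≤ δ)
    (ubar : U) (hls : ∀ v : U, ⟪F ubar - y, F v⟫ = 0)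
    (ω : U) (ξ : U →L[ℝ] ℝ) (hξω : ∀ v, ξ v = ⟪F ω, F v⟫)
    (hξ : IsSubgradientAt h ξ ubar)
    (α : ℝ) (hα : 0 < α)
    (s : ℝ) (hs : (s : EReal) = bregman h ξ (ubar - α • ω) ubar)
    (uαδ : U)
    (hmin : ∀ u : U,
      (((1 / 2) * ‖F uαδ - yδ‖ ^ 2 : ℝ) : EReal) + ((α : ℝ) : EReal) * h uαδ ≤
      (((1 / 2) * ‖F u - yδ‖ ^ 2 : ℝ) : EReal) + ((α : ℝ) : EReal) * h u) :
    bregman h ξ uαδ ubar ≤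
        ((s + δ ^ 2 / α + (δ / α) * Real.sqrt (δ ^ 2 + 2 * α * s) : ℝ) : EReal) ∧
      ‖F uαδ - F ubar‖ ≤ α * ‖F ω‖ + δ + Real.sqrt (δ ^ 2 + 2 * α * s) := by
  obtain ⟨hbot, ⟨v0, hv0⟩, -⟩ := hP
  -- h ubar is finite
  have hubarTop : h ubar ≠ ⊤ := by
    intro htop
    apply hv0
    have h1 := hξ v0
    rw [htop, EReal.top_add_coe] at h1
    exact top_le_iff.mp h1
  have ha : (((h ubar).toReal : ℝ) : EReal) = h ubar := EReal.coe_toReal hubarTop (hbot _)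
  set a : ℝ := (h ubar).toReal with ha'
  -- h (ubar - α • ω) is finite
  have hbt : h (ubar - α • ω) ≠ ⊤ := by
    intro htop
    rw [bregman, htop, ← ha] at hs
    rw [EReal.top_sub_coe, EReal.top_sub_coe] at hs
    exact (EReal.coe_ne_top s) hs
  have hb : (((h (ubar - α • ω)).toReal : ℝ) : EReal) = h (ubar - α • ω) :=
    EReal.coe_toReal hbt (hbot _)
  set b : ℝ := (h (ubar - α • ω)).toReal with hb'
  -- value of ξ at (ubar - α•ω) - ubar
  have hξ0 : ξ ((ubar - α • ω) - ubar) = -(α * ⟪F ω, F ω⟫) := by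
    rw [hξω, show (ubar - α • ω) - ubar = -(α • ω) by abel, map_neg, map_smul,
      inner_neg_right, real_inner_smul_right]
  -- s = b - a + α‖Fω‖²
  have hsb : s = b - a + α * ⟪F ω, F ω⟫ := by
    rw [bregman, ← ha, ← hb, hξ0] at hs
    norm_cast at hs
    linarith
  -- h uαδ is finite
  have hmin1 := hmin (ubar - α • ω)
  rw [← hb] at hmin1
  have hct : h uαδ ≠ ⊤ := by
    intro htop
    rw [htop] at hmin1
    rw [show ((α:ℝ):EReal) * (⊤ : EReal) = ⊤ from
      EReal.mul_top_of_pos (by exact_mod_cast hα)] at hmin1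
    rw [EReal.add_top_of_ne_bot (EReal.coe_ne_bot _)] at hmin1
    have : (⊤ : EReal) ≤ ((((1 / 2) * ‖F (ubar - α • ω) - yδ‖ ^ 2 + α * b : ℝ)) : EReal) := by
      rw [EReal.coe_add, EReal.coe_mul]
      exact hmin1
    exact (EReal.coe_ne_top _) (top_le_iff.mp this)
  have hc : (((h uαδ).toReal : ℝ) : EReal) = h uαδ := EReal.coe_toReal hct (hbot _)
  set c : ℝ := (h uαδ).toReal with hc'
  -- real form of minimality at ubar - α•ω
  have hminR : (1/2) * ‖F uαδ - yδ‖^2 + α * c ≤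
      (1/2) * ‖F (ubar - α • ω) - yδ‖^2 + α * b := by
    rw [← hc] at hmin1
    have : ((((1 / 2) * ‖F uαδ - yδ‖ ^ 2 + α * c : ℝ)) : EReal) ≤
        ((((1 / 2) * ‖F (ubar - α • ω) - yδ‖ ^ 2 + α * b : ℝ)) : EReal) := by
      rw [EReal.coe_add, EReal.coe_add, EReal.coe_mul, EReal.coe_mul]
      exact hmin1
    exact_mod_cast this
  -- real form of the subgradient inequality at uαδ
  have hsubR : a + ξ (uαδ - ubar) ≤ c := by
    have h1 := hξ uαδ
    rw [← ha, ← hc, ← EReal.coe_add] at h1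
    exact_mod_cast h1
  -- notation
  set p : H := F uαδ - F ubar with hp
  set q : H := F ubar - y with hq
  set e : H := y - yδ with he
  set w : H := F ω with hw
  have hqp : ⟪q, p⟫ = 0 := by
    rw [hp, hq, ← map_sub]; exact hls _
  have hqw : ⟪q, w⟫ = 0 := hls ω
  have hFu : F uαδ - yδ = p + q + e := by rw [hp, hq, he]; abel
  have hFv : F (ubar - α • ω) - yδ = q + e - α • w := by
    rw [map_sub, map_smul, hq, he, hw]; abel
  have hξu : ξ (uαδ - ubar) = ⟪w, p⟫ := by
    rw [hξω, map_sub, hp, hw]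
  have hiww : ⟪w, w⟫ = ‖w‖^2 := real_inner_self_eq_norm_sq w
  -- key inequality
  have hkey : (1/2)*‖p + α•w‖^2 + ⟪p + α•w, e⟫ + α * (c - a - ⟪w, p⟫) ≤ α * s := by
    have hid := key_identity p q e w α hqp hqw
    rw [hFu, hFv] at hminR
    have hsb' : α * s = α*b - α*a + α^2 * ⟪w, w⟫ := by rw [hsb]; ring
    have hiww' : α^2 * ⟪w, w⟫ = α^2 * ‖w‖^2 := by rw [hiww]
    linarith
  set r : ℝ := ‖p + α•w‖ with hr
  have hre : |⟪p + α•w, e⟫| ≤ r * δ := by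
    calc |⟪p + α•w, e⟫| ≤ ‖p + α•w‖ * ‖e‖ := abs_real_inner_le_norm _ _
    _ ≤ r * δ := by
        apply mul_le_mul_of_nonneg_left hnoise (norm_nonneg _)
  have hD : 0 ≤ c - a - ⟪w, p⟫ := by rw [← hξu]; linarith
  have haD : 0 ≤ α * (c - a - ⟪w, p⟫) := mul_nonneg hα.le hD
  have h2 : -(r*δ) ≤ ⟪p + α•w, e⟫ := neg_le_of_abs_le hre
  have hr2 : (r - δ)^2 ≤ δ^2 + 2*α*s := by
    have h1 : (1/2)*r^2 + ⟪p + α•w, e⟫ ≤ α * s := by linarith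
    have hexp : (r - δ)^2 = r^2 - 2*(r*δ) + δ^2 := by ring
    linarith [h1, h2, hexp.le, hexp.ge]
  have hsq : |r - δ| ≤ Real.sqrt (δ^2 + 2*α*s) := by
    rw [← Real.sqrt_sq_eq_abs]
    exact Real.sqrt_le_sqrt hr2
  have hrle : r ≤ δ + Real.sqrt (δ^2 + 2*α*s) := by
    have := (abs_le.mp hsq).2
    linarith
  have hsqnn : 0 ≤ Real.sqrt (δ^2 + 2*α*s) := Real.sqrt_nonneg _
  constructor
  · -- Bregman estimate
    have hDR : c - a - ⟪w, p⟫ ≤ s + δ^2/α + (δ/α) * Real.sqrt (δ^2 + 2*α*s) := by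
      have h1 : α * (c - a - ⟪w, p⟫) ≤ α * s + r * δ := by
        linarith [hkey, h2, sq_nonneg r]
      have h3 : r * δ ≤ δ^2 + δ * Real.sqrt (δ^2 + 2*α*s) := by
        have h6 := mul_le_mul_of_nonneg_right hrle hδ.le
        linarith [h6]
      have h4 : c - a - ⟪w, p⟫ ≤ (α * s + δ^2 + δ * Real.sqrt (δ^2 + 2*α*s)) / α := by
        rw [le_div_iff₀ hα]
        linarith [h1, h3]
      have h5 : (α * s + δ^2 + δ * Real.sqrt (δ^2 + 2*α*s)) / α
          = s + δ^2/α + (δ/α) * Real.sqrt (δ^2 + 2*α*s) := by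
        field_simp
      linarith [h4, h5.le, h5.ge]
    have hbreg : bregman h ξ uαδ ubar = (((c - a - ⟪w, p⟫ : ℝ)) : EReal) := by
      rw [bregman, ← ha, ← hc, hξu]
      push_cast
      rfl
    rw [hbreg]
    exact_mod_cast hDR
  · -- norm estimate
    have : ‖p‖ ≤ r + α * ‖w‖ := by
      have h1 : ‖p‖ ≤ ‖p + α•w‖ + ‖α•w‖ := by
        calc ‖p‖ = ‖(p + α•w) - α•w‖ := by rw [add_sub_cancel_right]
        _ ≤ ‖p + α•w‖ + ‖α•w‖ := norm_sub_le _ _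
      rw [norm_smul, Real.norm_eq_abs, abs_of_pos hα] at h1
      exact h1
    rw [hp, hw] at this ⊢ <;> try skip
    linarith
end
end

section
/- Let U be a real Banach space, H a real Hilbert space, F : U → H a bounded linear operator, and h : U → ℝ ∪ {+∞} a proper convex functional. Let ū be a least-squares solution (⟨F ū − y, F v⟩ = 0 for all v ∈ U) and ω ∈ U with ξ = F*F ω ∈ ∂h(ū). Suppose moreover h is finite and twice Fréchet differentiable on an open neighborhood of ū with ⟨h''(u)v, v⟩ ≤ M‖v‖² for all u in this neighborhood and all v ∈ U, and that ξ = h'(ū). Then there exist constants C > 0 and δ₀ > 0 such that for every δ ∈ (0, δ₀], every data y^δ with ‖y − y^δ‖ ≤ δ, and the parameter choice α = δ^(2/3), every minimizer u_α^δ of J_α(u) = (1/2)‖F u − y^δ‖² + α h(u) satisfies D_ξ(u_α^δ, ū) ≤ C δ^(4/3); moreover for exact data there exist C' > 0 and α₀ > 0 such that every minimizer u_α of u ↦ (1/2)‖F u − y‖² + α h(u) with 0 < α ≤ α₀ satisfies D_ξ(u_α, ū) ≤ C' α². -/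
open scoped RealInnerProductSpace

noncomputable section

/-- Second-order Taylor upper bound along a segment. -/
lemma taylor_upper {U : Type*} [NormedAddCommGroup U] [NormedSpace ℝ U]
    (N : Set U) (g : U → ℝ) (g' : U → U →L[ℝ] ℝ) (g'' : U → U →L[ℝ] U →L[ℝ] ℝ)
    (hg' : ∀ u ∈ N, HasFDerivAt g (g' u) u)
    (hg'' : ∀ u ∈ N, HasFDerivAt g' (g'' u) u)
    (M : ℝ) (hbound : ∀ u ∈ N, ∀ v : U, g'' u v v ≤ M * ‖v‖ ^ 2)
    (ubar v : U) (hseg : ∀ t ∈ Set.Icc (0:ℝ) 1, ubar + t • v ∈ N) :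
    g (ubar + v) ≤ g ubar + g' ubar v + M / 2 * ‖v‖ ^ 2 := by
  set c : ℝ → U := fun t => ubar + t • v with hc
  have hcd : ∀ t : ℝ, HasDerivAt c v t := by
    intro t
    have := ((hasDerivAt_id t).smul_const v).const_add ubar
    rw [hc]
    simpa [one_smul] using this
  have hχ : ∀ t ∈ Set.Icc (0:ℝ) 1,
      HasDerivAt (fun s => g' (c s) v) (g'' (c t) v v) t := by
    intro t ht
    have h1 : HasDerivAt (fun s => g' (c s)) (g'' (c t) v) t :=
      (hg'' _ (hseg t ht)).comp_hasDerivAt t (hcd t)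
    exact (ContinuousLinearMap.apply ℝ ℝ v).hasFDerivAt.comp_hasDerivAt t h1
  have stepA : ∀ t ∈ Set.Icc (0:ℝ) 1, g' (c t) v ≤ g' ubar v + M * t * ‖v‖ ^ 2 := by
    intro t ht
    set χ : ℝ → ℝ := fun s => g' (c s) v - M * s * ‖v‖ ^ 2 with hχdef
    have hχd : ∀ s ∈ Set.Icc (0:ℝ) 1,
        HasDerivAt χ (g'' (c s) v v - M * ‖v‖ ^ 2) s := by
      intro s hs
      have h2 : HasDerivAt (fun s : ℝ => M * s * ‖v‖ ^ 2) (M * ‖v‖ ^ 2) s := by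
        simpa using ((hasDerivAt_id s).const_mul M).mul_const (‖v‖ ^ 2)
      exact (hχ s hs).sub h2
    have hanti : AntitoneOn χ (Set.Icc (0:ℝ) 1) := by
      apply antitoneOn_of_deriv_nonpos (convex_Icc 0 1)
      · exact fun s hs => ((hχd s hs).continuousAt).continuousWithinAt
      · intro s hs
        rw [interior_Icc] at hs
        exact ((hχd s (Set.mem_Icc_of_Ioo hs)).differentiableAt).differentiableWithinAt
      · intro s hs
        rw [interior_Icc] at hs
        rw [(hχd s (Set.mem_Icc_of_Ioo hs)).deriv]
        have := hbound (c s) (hseg s (Set.mem_Icc_of_Ioo hs)) v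
        linarith
    have h0 : χ 0 = g' ubar v := by simp [hχdef, hc]
    have := hanti (Set.left_mem_Icc.mpr one_pos.le) ht ht.1
    rw [h0] at this
    simp only [hχdef] at this
    linarith
  set ψ : ℝ → ℝ := fun t => g (c t) - g' ubar v * t - M / 2 * t ^ 2 * ‖v‖ ^ 2 with hψdef
  have hψd : ∀ t ∈ Set.Icc (0:ℝ) 1,
      HasDerivAt ψ (g' (c t) v - g' ubar v - M * t * ‖v‖ ^ 2) t := by
    intro t ht
    have h1 : HasDerivAt (fun s => g (c s)) (g' (c t) v) t :=
      (hg' _ (hseg t ht)).comp_hasDerivAt t (hcd t)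
    have h2 : HasDerivAt (fun s : ℝ => g' ubar v * s) (g' ubar v) t := by
      simpa using (hasDerivAt_id t).const_mul (g' ubar v)
    have h3 : HasDerivAt (fun s : ℝ => M / 2 * s ^ 2 * ‖v‖ ^ 2) (M * t * ‖v‖ ^ 2) t := by
      have := ((hasDerivAt_pow 2 t).const_mul (M / 2)).mul_const (‖v‖ ^ 2)
      refine this.congr_deriv ?_
      ring
    exact (h1.sub h2).sub h3
  have hanti : AntitoneOn ψ (Set.Icc (0:ℝ) 1) := by
    apply antitoneOn_of_deriv_nonpos (convex_Icc 0 1)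
    · exact fun s hs => ((hψd s hs).continuousAt).continuousWithinAt
    · intro s hs
      rw [interior_Icc] at hs
      exact ((hψd s (Set.mem_Icc_of_Ioo hs)).differentiableAt).differentiableWithinAt
    · intro s hs
      rw [interior_Icc] at hs
      rw [(hψd s (Set.mem_Icc_of_Ioo hs)).deriv]
      have := stepA s (Set.mem_Icc_of_Ioo hs)
      linarith
  have h01 := hanti (Set.left_mem_Icc.mpr one_pos.le) (Set.right_mem_Icc.mpr one_pos.le) one_pos.le
  have hc0 : c 0 = ubar := by simp [hc]
  have hc1 : c 1 = ubar + v := by simp [hc]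
  simp only [hψdef, hc0, hc1] at h01
  norm_num at h01
  linarith

/-- The core algebraic estimate in the Hilbert space. -/
lemma alg_estimate {H : Type*} [NormedAddCommGroup H] [InnerProductSpace ℝ H]
    (p q r e : H) (α M a G T W : ℝ) (hα : 0 ≤ α)
    (hpr : ⟪p, r⟫ = 0) (hqr : ⟪q, r⟫ = 0)
    (hmin : 1 / 2 * ‖p + r + e‖ ^ 2 + α * a ≤ 1 / 2 * ‖r + e - α • q‖ ^ 2 + α * T)
    (hT : T ≤ G - α * ‖q‖ ^ 2 + M / 2 * α ^ 2 * W) :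
    α * (a - G - ⟪q, p⟫) ≤ ‖e‖ ^ 2 / 2 + M / 2 * α ^ 3 * W := by
  have hsm : ‖α • q‖ ^ 2 = α ^ 2 * ‖q‖ ^ 2 := by
    rw [norm_smul]; simp [mul_pow, sq_abs]
  have E1 : ‖p + r + e‖ ^ 2 = ‖p‖ ^ 2 + ‖r‖ ^ 2 + ‖e‖ ^ 2 + 2 * ⟪p, e⟫ + 2 * ⟪r, e⟫ := by
    rw [norm_add_sq_real (p + r) e, norm_add_sq_real p r, inner_add_left, hpr]; ring
  have E2 : ‖r + e - α • q‖ ^ 2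
      = ‖r‖ ^ 2 + ‖e‖ ^ 2 + α ^ 2 * ‖q‖ ^ 2 + 2 * ⟪r, e⟫ - 2 * α * ⟪e, q⟫ := by
    rw [norm_sub_sq_real (r + e) (α • q), norm_add_sq_real r e, inner_add_left,
      real_inner_smul_right, real_inner_smul_right, hsm, real_inner_comm q r, hqr]
    ring
  have E3 : ‖p + α • q + e‖ ^ 2
      = ‖p‖ ^ 2 + α ^ 2 * ‖q‖ ^ 2 + ‖e‖ ^ 2 + 2 * α * ⟪p, q⟫ + 2 * ⟪p, e⟫
        + 2 * α * ⟪q, e⟫ := by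
    rw [norm_add_sq_real (p + α • q) e, norm_add_sq_real p (α • q), inner_add_left,
      real_inner_smul_right, real_inner_smul_left, hsm]
    ring
  have h1 : α * T ≤ α * (G - α * ‖q‖ ^ 2 + M / 2 * α ^ 2 * W) :=
    mul_le_mul_of_nonneg_left hT hα
  have h2 : (0:ℝ) ≤ ‖p + α • q + e‖ ^ 2 := sq_nonneg _
  rw [E3] at h2
  rw [E1, E2] at hmin
  have hcq : ⟪q, e⟫ = ⟪e, q⟫ := real_inner_comm e q
  have hcp : ⟪q, p⟫ = ⟪p, q⟫ := real_inner_comm p q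
  nlinarith [hmin, h1, h2]

set_option maxHeartbeats 1000000 in
/-- convergence rates `O(δ^(4/3))` (noisy data, `α = δ^(2/3)`) and
`O(α²)` (exact data) for linear Tikhonov regularization under the source
condition of type II and a bounded second derivative of the penalty. -/
theorem tikhonov_linear_rates_typeII
    {U H : Type*} [NormedAddCommGroup U] [NormedSpace ℝ U] [CompleteSpace U]
    [NormedAddCommGroup H] [InnerProductSpace ℝ H] [CompleteSpace H]
    (F : U →L[ℝ] H) (h : U → EReal) (hP : ProperConvex h)
    (y : H)
    (ubar : U) (hls : ∀ v : U, ⟪F ubar - y, F v⟫ = 0)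
    (ω : U) (ξ : U →L[ℝ] ℝ) (hξω : ∀ v, ξ v = ⟪F ω, F v⟫)
    (hξ : IsSubgradientAt h ξ ubar)
    (N : Set U) (hNopen : IsOpen N) (hubar : ubar ∈ N)
    (g : U → ℝ) (hgh : ∀ u ∈ N, h u = (g u : EReal))
    (g' : U → U →L[ℝ] ℝ) (g'' : U → U →L[ℝ] U →L[ℝ] ℝ)
    (hg' : ∀ u ∈ N, HasFDerivAt g (g' u) u)
    (hg'' : ∀ u ∈ N, HasFDerivAt g' (g'' u) u)
    (M : ℝ) (hM : 0 < M)
    (hbound : ∀ u ∈ N, ∀ v : U, g'' u v v ≤ M * ‖v‖ ^ 2)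
    (hξg : ξ = g' ubar) :
    (∃ C > (0 : ℝ), ∃ δ₀ > (0 : ℝ), ∀ δ : ℝ, 0 < δ → δ ≤ δ₀ →
      ∀ yδ : H, ‖y - yδ‖ ≤ δ →
      ∀ uαδ : U, (∀ u : U,
        (((1 / 2) * ‖F uαδ - yδ‖ ^ 2 : ℝ) : EReal)
            + ((δ ^ ((2 : ℝ) / 3) : ℝ) : EReal) * h uαδ ≤
        (((1 / 2) * ‖F u - yδ‖ ^ 2 : ℝ) : EReal)
            + ((δ ^ ((2 : ℝ) / 3) : ℝ) : EReal) * h u) →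
      bregman h ξ uαδ ubar ≤ ((C * δ ^ ((4 : ℝ) / 3) : ℝ) : EReal)) ∧
    (∃ C' > (0 : ℝ), ∃ α₀ > (0 : ℝ), ∀ α : ℝ, 0 < α → α ≤ α₀ →
      ∀ uα : U, (∀ u : U,
        (((1 / 2) * ‖F uα - y‖ ^ 2 : ℝ) : EReal) + ((α : ℝ) : EReal) * h uα ≤
        (((1 / 2) * ‖F u - y‖ ^ 2 : ℝ) : EReal) + ((α : ℝ) : EReal) * h u) →
      bregman h ξ uα ubar ≤ ((C' * α ^ 2 : ℝ) : EReal)) := by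
  obtain ⟨hbot, -, -⟩ := hP
  obtain ⟨ρ, hρ, hball⟩ := Metric.isOpen_iff.mp hNopen ubar hubar
  have key : ∀ α : ℝ, 0 < α → α * ‖ω‖ < ρ → ∀ yδ : H, ∀ ua : U,
      (∀ u : U, (((1 / 2) * ‖F ua - yδ‖ ^ 2 : ℝ) : EReal) + ((α : ℝ) : EReal) * h ua ≤
        (((1 / 2) * ‖F u - yδ‖ ^ 2 : ℝ) : EReal) + ((α : ℝ) : EReal) * h u) →
      ∃ a : ℝ, h ua = (a : EReal) ∧
        α * (a - g ubar - ξ (ua - ubar)) ≤ ‖y - yδ‖ ^ 2 / 2 + M / 2 * α ^ 3 * ‖ω‖ ^ 2 := by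
    intro α hα hαρ yδ ua hmin
    have hseg : ∀ t ∈ Set.Icc (0:ℝ) 1, ubar + t • (-(α • ω)) ∈ N := by
      intro t ht
      apply hball
      rw [Metric.mem_ball, dist_eq_norm]
      have heq : ubar + t • (-(α • ω)) - ubar = t • (-(α • ω)) := by abel
      rw [heq, norm_smul, norm_neg, norm_smul]
      calc ‖t‖ * (‖α‖ * ‖ω‖) ≤ 1 * (α * ‖ω‖) := by
            rw [Real.norm_eq_abs, Real.norm_eq_abs, abs_of_nonneg ht.1, abs_of_nonneg hα.le]
            exact mul_le_mul_of_nonneg_right ht.2 (by positivity)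
        _ < ρ := by rw [one_mul]; exact hαρ
    have hu0N : ubar - α • ω ∈ N := by
      have := hseg 1 (Set.right_mem_Icc.mpr one_pos.le)
      simpa [sub_eq_add_neg] using this
    have htay := taylor_upper N g g' g'' hg' hg'' M hbound ubar (-(α • ω)) hseg
    have hξω2 : ξ ω = ‖F ω‖ ^ 2 := by
      rw [hξω ω, real_inner_self_eq_norm_sq]
    have hT : g (ubar - α • ω)
        ≤ g ubar - α * ‖F ω‖ ^ 2 + M / 2 * α ^ 2 * ‖ω‖ ^ 2 := by
      have h1 : ubar + -(α • ω) = ubar - α • ω := (sub_eq_add_neg ubar (α • ω)).symm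
      have h2 : g' ubar (-(α • ω)) = -(α * ξ ω) := by
        rw [← hξg, map_neg, map_smul, smul_eq_mul]
      have h3 : ‖-(α • ω)‖ ^ 2 = α ^ 2 * ‖ω‖ ^ 2 := by
        rw [norm_neg, norm_smul]; simp [mul_pow, sq_abs]
      rw [h1, h2, h3, hξω2] at htay
      linarith
    have hmin0 := hmin (ubar - α • ω)
    rw [hgh _ hu0N] at hmin0
    have htop : h ua ≠ ⊤ := by
      intro hE
      rw [hE, EReal.mul_top_of_pos (EReal.coe_pos.mpr hα)] at hmin0
      have hL : (((1 / 2) * ‖F ua - yδ‖ ^ 2 : ℝ) : EReal) + (⊤ : EReal) = ⊤ := rfl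
      rw [hL, ← EReal.coe_mul, ← EReal.coe_add, top_le_iff] at hmin0
      exact EReal.coe_ne_top _ hmin0
    have ha : h ua = ((h ua).toReal : EReal) := (EReal.coe_toReal htop (hbot ua)).symm
    set a := (h ua).toReal with hadef
    refine ⟨a, ha, ?_⟩
    rw [ha, ← EReal.coe_mul, ← EReal.coe_add, ← EReal.coe_mul, ← EReal.coe_add,
      EReal.coe_le_coe_iff] at hmin0
    have hrw1 : F ua - yδ = (F ua - F ubar) + (F ubar - y) + (y - yδ) := by abel
    have hrw2 : F (ubar - α • ω) - yδ = (F ubar - y) + (y - yδ) - α • (F ω) := by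
      rw [map_sub, map_smul]; abel
    have hpr : ⟪F ua - F ubar, F ubar - y⟫ = 0 := by
      rw [← map_sub, real_inner_comm]
      exact hls _
    have hqr : ⟪F ω, F ubar - y⟫ = 0 := by
      rw [real_inner_comm]
      exact hls ω
    have hξp : ξ (ua - ubar) = ⟪F ω, F ua - F ubar⟫ := by
      rw [hξω, map_sub]
    rw [hrw1, hrw2] at hmin0
    have := alg_estimate (F ua - F ubar) (F ω) (F ubar - y) (y - yδ) α M a (g ubar)
      (g (ubar - α • ω)) (‖ω‖ ^ 2) hα.le hpr hqr hmin0 hT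
    rw [hξp]
    linarith
  constructor
  · refine ⟨1 / 2 + M / 2 * ‖ω‖ ^ 2, by positivity,
      min 1 ((ρ / (‖ω‖ + 1)) ^ ((3:ℝ) / 2)), lt_min one_pos (Real.rpow_pos_of_pos (by positivity) _), ?_⟩
    intro δ hδ hδ0 yδ hyδ ua hmin
    set α := δ ^ ((2:ℝ) / 3) with hαdef
    have hα : 0 < α := Real.rpow_pos_of_pos hδ _
    have hb : (0:ℝ) < ρ / (‖ω‖ + 1) := by positivity
    have hα_le : α ≤ ρ / (‖ω‖ + 1) := by
      have h1 : δ ≤ (ρ / (‖ω‖ + 1)) ^ ((3:ℝ) / 2) := le_trans hδ0 (min_le_right _ _)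
      have h2 : α ≤ ((ρ / (‖ω‖ + 1)) ^ ((3:ℝ) / 2)) ^ ((2:ℝ) / 3) :=
        Real.rpow_le_rpow hδ.le h1 (by norm_num)
      rwa [← Real.rpow_mul hb.le, (by norm_num : (3:ℝ) / 2 * (2 / 3) = 1),
        Real.rpow_one] at h2
    have hαρ : α * ‖ω‖ < ρ := by
      have h1 : α * ‖ω‖ ≤ ρ / (‖ω‖ + 1) * ‖ω‖ :=
        mul_le_mul_of_nonneg_right hα_le (norm_nonneg ω)
      have h2 : ρ / (‖ω‖ + 1) * ‖ω‖ < ρ := by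
        rw [div_mul_eq_mul_div, div_lt_iff₀ (by positivity)]
        nlinarith [norm_nonneg ω]
      linarith
    obtain ⟨a, ha, hest⟩ := key α hα hαρ yδ ua hmin
    have hα3 : α ^ 3 = δ ^ 2 := by
      rw [hαdef, ← Real.rpow_natCast (δ ^ ((2:ℝ) / 3)) 3, ← Real.rpow_mul hδ.le,
        (by norm_num : (2:ℝ) / 3 * ((3:ℕ):ℝ) = ((2:ℕ):ℝ)), Real.rpow_natCast]
    have hee : ‖y - yδ‖ ^ 2 ≤ δ ^ 2 := by nlinarith [norm_nonneg (y - yδ)]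
    have hkey : α * ((1 / 2 + M / 2 * ‖ω‖ ^ 2) * δ ^ ((4:ℝ) / 3))
        = (1 / 2 + M / 2 * ‖ω‖ ^ 2) * δ ^ 2 := by
      rw [hαdef, mul_comm (δ ^ ((2:ℝ) / 3)), mul_assoc, ← Real.rpow_add hδ,
        (by norm_num : (4:ℝ) / 3 + 2 / 3 = ((2:ℕ):ℝ)), Real.rpow_natCast]
    clear_value α
    have h5 : M / 2 * α ^ 3 * ‖ω‖ ^ 2 = M / 2 * ‖ω‖ ^ 2 * δ ^ 2 := by
      rw [hα3]; ring
    rw [h5] at hest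
    have hfin : α * (a - g ubar - ξ (ua - ubar))
        ≤ α * ((1 / 2 + M / 2 * ‖ω‖ ^ 2) * δ ^ ((4:ℝ) / 3)) := by
      rw [hkey]
      have hMw : 0 ≤ M / 2 * ‖ω‖ ^ 2 := by positivity
      nlinarith [hest, hee]
    have hD := (mul_le_mul_iff_right₀ hα).mp hfin
    have hbr : bregman h ξ ua ubar = ((a - g ubar - ξ (ua - ubar) : ℝ) : EReal) := by
      rw [bregman, ha, hgh ubar hubar, ← EReal.coe_sub, ← EReal.coe_sub]
    rw [hbr]
    exact EReal.coe_le_coe_iff.mpr hD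
  · refine ⟨M / 2 * ‖ω‖ ^ 2 + 1, by positivity, ρ / (2 * (‖ω‖ + 1)), by positivity, ?_⟩
    intro α hα hα0 ua hmin
    have hαρ : α * ‖ω‖ < ρ := by
      have h1 : α * ‖ω‖ ≤ ρ / (2 * (‖ω‖ + 1)) * ‖ω‖ :=
        mul_le_mul_of_nonneg_right hα0 (norm_nonneg ω)
      have h2 : ρ / (2 * (‖ω‖ + 1)) * ‖ω‖ < ρ := by
        rw [div_mul_eq_mul_div, div_lt_iff₀ (by positivity)]
        nlinarith [norm_nonneg ω]
      linarith
    obtain ⟨a, ha, hest⟩ := key α hα hαρ y ua hmin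
    have he0 : ‖y - y‖ = 0 := by simp
    rw [he0] at hest
    have hfin : α * (a - g ubar - ξ (ua - ubar))
        ≤ α * ((M / 2 * ‖ω‖ ^ 2 + 1) * α ^ 2) := by
      nlinarith [hest, pow_nonneg hα.le 3]
    have hD := (mul_le_mul_iff_right₀ hα).mp hfin
    have hbr : bregman h ξ ua ubar = ((a - g ubar - ξ (ua - ubar) : ℝ) : EReal) := by
      rw [bregman, ha, hgh ubar hubar, ← EReal.coe_sub, ← EReal.coe_sub]
    rw [hbr]
    exact EReal.coe_le_coe_iff.mpr hD
end
end

section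
/- Let U be a real Banach space, H a real Hilbert space, F : U → H a bounded linear operator, and h : U → ℝ ∪ {+∞} a proper convex functional. Let y, y^δ ∈ H with ‖y − y^δ‖ ≤ δ, let ū be a least-squares solution (⟨F ū − y, F v⟩ = 0 for all v ∈ U), let ω ∈ U with ξ = F*F ω ∈ ∂h(ū), and let u_α^δ be a global minimizer of J_α(u) = (1/2)‖F u − y^δ‖² + α h(u) for α ≥ 0. Then for every u ∈ U with h(u) < ∞ the inequality (1/2)‖F(u_α^δ − ū + αω)‖² + α D_ξ(u_α^δ, ū) ≤ ⟨F(u_α^δ − u), y^δ − y⟩ + α D_ξ(u, ū) + (1/2)‖F(u − ū + αω)‖² holds. -/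
open scoped RealInnerProductSpace

noncomputable section

lemma key_real {H : Type*} [NormedAddCommGroup H] [InnerProductSpace ℝ H]
    (p q b w y yδ : H) (α A B R : ℝ)
    (e1 : ⟪b - y, p⟫ = 0) (e2 : ⟪b - y, q⟫ = 0)
    (hm : (1/2) * ‖p - yδ‖^2 + α*A ≤ (1/2) * ‖q - yδ‖^2 + α*B) :
    (1/2) * ‖p - b + α•w‖^2 + α*(A - R - ⟪w, p - b⟫) ≤
      ⟪p - q, yδ - y⟫ + α*(B - R - ⟪w, q - b⟫) + (1/2) * ‖q - b + α•w‖^2 := by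
  have h1 : ∀ x : H, ‖x‖^2 = ⟪x, x⟫ := fun x => (real_inner_self_eq_norm_sq x).symm
  simp only [h1, inner_sub_left, inner_sub_right, inner_add_left, inner_add_right,
    inner_smul_left, inner_smul_right, starRingEnd_apply, star_trivial] at *
  have c1 := real_inner_comm p b
  have c2 := real_inner_comm q b
  have c3 := real_inner_comm p w
  have c4 := real_inner_comm q w
  have c5 := real_inner_comm b w
  have c6 := real_inner_comm p yδ
  have c7 := real_inner_comm q yδ
  have c8 := real_inner_comm p y
  have c9 := real_inner_comm q y
  simp only [c1, c2, c3, c4, c5, c6, c7, c8, c9] at *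
  nlinarith [hm, e1, e2, sq_nonneg α]

/-- the key intermediate inequality in the proof of the type-II
stability estimate for linear Tikhonov regularization. -/
theorem tikhonov_linear_typeII_key_inequality
    {U H : Type*} [NormedAddCommGroup U] [NormedSpace ℝ U] [CompleteSpace U]
    [NormedAddCommGroup H] [InnerProductSpace ℝ H] [CompleteSpace H]
    (F : U →L[ℝ] H) (h : U → EReal) (hP : ProperConvex h)
    (y yδ : H) (δ : ℝ) (hnoise : ‖y - yδ‖ ≤ δ)
    (ubar : U) (hls : ∀ v : U, ⟪F ubar - y, F v⟫ = 0)
    (ω : U) (ξ : U →L[ℝ] ℝ) (hξω : ∀ v, ξ v = ⟪F ω, F v⟫)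
    (hξ : IsSubgradientAt h ξ ubar)
    (α : ℝ) (hα : 0 ≤ α) (uαδ : U)
    (hmin : ∀ u : U,
      (((1 / 2) * ‖F uαδ - yδ‖ ^ 2 : ℝ) : EReal) + ((α : ℝ) : EReal) * h uαδ ≤
      (((1 / 2) * ‖F u - yδ‖ ^ 2 : ℝ) : EReal) + ((α : ℝ) : EReal) * h u)
    (u : U) (hu : h u ≠ ⊤) :
    (((1 / 2) * ‖F (uαδ - ubar + α • ω)‖ ^ 2 : ℝ) : EReal)
        + ((α : ℝ) : EReal) * bregman h ξ uαδ ubar ≤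
      ((⟪F (uαδ - u), yδ - y⟫ : ℝ) : EReal)
        + ((α : ℝ) : EReal) * bregman h ξ u ubar
        + (((1 / 2) * ‖F (u - ubar + α • ω)‖ ^ 2 : ℝ) : EReal) := by
  have hFsub1 : F (uαδ - ubar + α • ω) = F uαδ - F ubar + α • F ω := by
    simp [map_add, map_sub, map_smul]
  have hFsub2 : F (u - ubar + α • ω) = F u - F ubar + α • F ω := by
    simp [map_add, map_sub, map_smul]
  have hFsub3 : F (uαδ - u) = F uαδ - F u := by simp
  have hξ1 : ξ (uαδ - ubar) = ⟪F ω, F uαδ - F ubar⟫ := by rw [hξω]; simp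
  have hξ2 : ξ (u - ubar) = ⟪F ω, F u - F ubar⟫ := by rw [hξω]; simp
  -- h ubar and h u are finite
  obtain ⟨B, hB⟩ : ∃ B : ℝ, h u = (B : EReal) :=
    ⟨(h u).toReal, (EReal.coe_toReal hu (hP.1 u)).symm⟩
  have hbar_ne_top : h ubar ≠ ⊤ := by
    intro htop
    have h2 := hξ u
    rw [htop, hB, EReal.top_add_coe] at h2
    exact (EReal.coe_lt_top B).not_ge h2
  obtain ⟨R, hR⟩ : ∃ R : ℝ, h ubar = (R : EReal) :=
    ⟨(h ubar).toReal, (EReal.coe_toReal hbar_ne_top (hP.1 ubar)).symm⟩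
  rcases eq_or_lt_of_le hα with hα0 | hαpos
  · -- α = 0
    subst hα0
    have hmr : (1/2) * ‖F uαδ - yδ‖^2 + (0:ℝ)*0 ≤ (1/2) * ‖F u - yδ‖^2 + (0:ℝ)*0 := by
      have := hmin u
      simp only [EReal.coe_zero, zero_mul, add_zero] at this
      have := EReal.coe_le_coe_iff.mp this
      linarith
    have key := key_real (F uαδ) (F u) (F ubar) (F ω) y yδ 0 0 0 0
      (hls uαδ) (hls u) hmr
    simp only [EReal.coe_zero, zero_mul, add_zero, hFsub1, hFsub2, hFsub3]
    simp only [zero_mul, add_zero] at key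
    exact_mod_cast key
  · -- α > 0
    have hδ_ne_top : h uαδ ≠ ⊤ := by
      intro htop
      have h2 := hmin u
      rw [htop, hB, EReal.mul_top_of_pos (EReal.coe_pos.2 hαpos), EReal.coe_add_top,
        ← EReal.coe_mul, ← EReal.coe_add] at h2
      exact (EReal.coe_lt_top _).not_ge h2
    obtain ⟨A, hA⟩ : ∃ A : ℝ, h uαδ = (A : EReal) :=
      ⟨(h uαδ).toReal, (EReal.coe_toReal hδ_ne_top (hP.1 uαδ)).symm⟩
    have hmr : (1/2) * ‖F uαδ - yδ‖^2 + α*A ≤ (1/2) * ‖F u - yδ‖^2 + α*B := by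
      have := hmin u
      rw [hA, hB, ← EReal.coe_mul, ← EReal.coe_mul, ← EReal.coe_add, ← EReal.coe_add] at this
      exact_mod_cast this
    have key := key_real (F uαδ) (F u) (F ubar) (F ω) y yδ α A B R
      (hls uαδ) (hls u) hmr
    have hb1 : bregman h ξ uαδ ubar = ((A - R - ⟪F ω, F uαδ - F ubar⟫ : ℝ) : EReal) := by
      rw [bregman, hA, hR, hξ1]; norm_cast
    have hb2 : bregman h ξ u ubar = ((B - R - ⟪F ω, F u - F ubar⟫ : ℝ) : EReal) := by
      rw [bregman, hB, hR, hξ2]; norm_cast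
    rw [hb1, hb2, hFsub1, hFsub2, hFsub3, ← EReal.coe_mul, ← EReal.coe_mul,
      ← EReal.coe_add, ← EReal.coe_add, ← EReal.coe_add, EReal.coe_le_coe_iff]
    exact key
end
end

section
/- Let U and H be real Banach spaces, D(F) ⊆ U, F : D(F) → H a map, and h : U → ℝ ∪ {+∞} a proper convex functional. Let y, y^δ ∈ H with ‖y − y^δ‖ ≤ δ, and let ū ∈ D(F) be an h-minimizing solution of F(u) = y. Let A : U → H be a bounded linear operator which is the Gâteaux derivative of F at ū, let ω ∈ H* be such that ξ = A*ω (i.e. ξ(v) = ω(A v) for all v ∈ U) is a subgradient of h at ū, let c > 0, ρ > 0 be such that ‖F(u) − F(ū) − A(u − ū)‖ ≤ c · D_ξ(u, ū) for all u ∈ D(F) with ‖u − ū‖ < ρ, and assume c‖ω‖ < 1. Let α > 0 and let u_α^δ be a minimizer over D(F) of J_α(u) = (1/2)‖F(u) − y^δ‖² + α h(u), with u_α^δ ∈ D(F) and ‖u_α^δ − ū‖ < ρ. Then ‖F(u_α^δ) − F(ū)‖ ≤ 2α‖ω‖ + 2√(α²‖ω‖² + δ²) and D_ξ(u_α^δ,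 ū) ≤ (2 / (1 − c‖ω‖)) · [ δ²/(2α) + α‖ω‖² + ‖ω‖√(α²‖ω‖² + δ²) ]. -/
open scoped RealInnerProductSpace

noncomputable section

set_option maxHeartbeats 1000000 in
/-- stability for nonlinear Tikhonov regularization under the
source condition of type I (`F'(ū)* ω ∈ ∂h(ū)`, `ω ∈ H*`). -/
theorem tikhonov_nonlinear_stability_typeI
    {U H : Type*} [NormedAddCommGroup U] [NormedSpace ℝ U] [CompleteSpace U]
    [NormedAddCommGroup H] [NormedSpace ℝ H] [CompleteSpace H]
    (DF : Set U) (F : U → H) (h : U → EReal) (hP : ProperConvex h)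
    (y yδ : H) (δ : ℝ) (hnoise : ‖y - yδ‖ ≤ δ)
    (ubar : U) (hubarD : ubar ∈ DF) (hub : F ubar = y)
    (hubmin : ∀ u ∈ DF, F u = y → h ubar ≤ h u)
    (A : U →L[ℝ] H)
    (hA : ∀ v : U, HasDerivAt (fun t : ℝ => F (ubar + t • v)) (A v) 0)
    (ω : H →L[ℝ] ℝ) (ξ : U →L[ℝ] ℝ) (hξω : ∀ v, ξ v = ω (A v))
    (hξ : IsSubgradientAt h ξ ubar)
    (c ρ : ℝ) (hc : 0 < c) (hρ : 0 < ρ)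
    (hcone : ∀ u ∈ DF, ‖u - ubar‖ < ρ →
      ((‖F u - F ubar - A (u - ubar)‖ : ℝ) : EReal) ≤ ((c : ℝ) : EReal) * bregman h ξ u ubar)
    (hcω : c * ‖ω‖ < 1)
    (α : ℝ) (hα : 0 < α)
    (uαδ : U) (huD : uαδ ∈ DF) (huρ : ‖uαδ - ubar‖ < ρ)
    (hmin : ∀ u ∈ DF,
      (((1 / 2) * ‖F uαδ - yδ‖ ^ 2 : ℝ) : EReal) + ((α : ℝ) : EReal) * h uαδ ≤
      (((1 / 2) * ‖F u - yδ‖ ^ 2 : ℝ) : EReal) + ((α : ℝ) : EReal) * h u) :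
    ‖F uαδ - F ubar‖ ≤ 2 * α * ‖ω‖ + 2 * Real.sqrt (α ^ 2 * ‖ω‖ ^ 2 + δ ^ 2) ∧
      bregman h ξ uαδ ubar ≤
        (((2 / (1 - c * ‖ω‖)) *
          (δ ^ 2 / (2 * α) + α * ‖ω‖ ^ 2
            + ‖ω‖ * Real.sqrt (α ^ 2 * ‖ω‖ ^ 2 + δ ^ 2)) : ℝ) : EReal) := by

  classical
  set K := ‖ω‖ with hKdef
  have hK0 : (0:ℝ) ≤ K := norm_nonneg _
  have hδ0 : (0:ℝ) ≤ δ := le_trans (norm_nonneg _) hnoise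
  have hE : (0:ℝ) < 1 - c * K := by linarith
  -- h ubar is finite
  obtain ⟨v0, hv0⟩ := hP.2.1
  have hub_ne_top : h ubar ≠ ⊤ := by
    intro htop
    have h1 := hξ v0
    rw [htop] at h1
    rw [EReal.top_add_coe] at h1
    exact hv0 (top_le_iff.mp h1)
  set a := (h ubar).toReal with hadef
  have hha : h ubar = ((a : ℝ) : EReal) := (EReal.coe_toReal hub_ne_top (hP.1 ubar)).symm
  -- h uαδ is finite
  have hmin1 := hmin ubar hubarD
  have hu_ne_top : h uαδ ≠ ⊤ := by
    intro htop
    rw [htop, hha] at hmin1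
    rw [EReal.mul_top_of_pos (by exact_mod_cast hα)] at hmin1
    rw [EReal.coe_add_top] at hmin1
    have : ((((1 / 2) * ‖F ubar - yδ‖ ^ 2 : ℝ) : EReal) + ((α : ℝ) : EReal) * ((a : ℝ) : EReal)) ≠ ⊤ := by
      rw [← EReal.coe_mul, ← EReal.coe_add]; exact EReal.coe_ne_top _
    exact this (top_le_iff.mp hmin1)
  set b := (h uαδ).toReal with hbdef
  have hhb : h uαδ = ((b : ℝ) : EReal) := (EReal.coe_toReal hu_ne_top (hP.1 uαδ)).symm
  -- notation
  set s := ‖F uαδ - yδ‖ with hsdef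
  set t := ‖F uαδ - F ubar‖ with htdef
  set x := ξ (uαδ - ubar) with hxdef
  set r := F uαδ - F ubar - A (uαδ - ubar) with hrdef
  have hs0 : (0:ℝ) ≤ s := norm_nonneg _
  have ht0 : (0:ℝ) ≤ t := norm_nonneg _
  -- minimality in ℝ
  have hmR : (1/2) * s^2 + α * b ≤ (1/2) * ‖F ubar - yδ‖^2 + α * a := by
    rw [hha, hhb] at hmin1
    exact_mod_cast hmin1
  have hFub : ‖F ubar - yδ‖ ≤ δ := by rw [hub]; exact hnoise
  have hFub2 : ‖F ubar - yδ‖^2 ≤ δ^2 := by nlinarith [norm_nonneg (F ubar - yδ)]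
  -- subgradient in ℝ : a + x ≤ b
  have hsub := hξ uαδ
  rw [hha, hhb, ← hxdef] at hsub
  have hsubR : a + x ≤ b := by exact_mod_cast hsub
  set D := b - a - x with hDdef
  have hD0 : (0:ℝ) ≤ D := by simp [hDdef]; linarith
  -- bregman as a real
  have hbreg : bregman h ξ uαδ ubar = ((D : ℝ) : EReal) := by
    unfold bregman
    rw [hha, hhb, ← hxdef, hDdef]
    rw [← EReal.coe_sub, ← EReal.coe_sub]
  -- cone condition in ℝ
  have hconeR : ‖r‖ ≤ c * D := by
    have h2 := hcone uαδ huD huρ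
    rw [hbreg, ← hrdef, ← EReal.coe_mul] at h2
    exact_mod_cast h2
  have hr0 : (0:ℝ) ≤ ‖r‖ := norm_nonneg _
  clear_value K a b s t x D r
  -- x = ω (F uαδ - F ubar) - ω r
  have hxval : x = ω (F uαδ - F ubar) - ω r := by
    rw [hxdef, hξω]
    have : A (uαδ - ubar) = (F uαδ - F ubar) - r := by rw [hrdef]; abel
    rw [this, map_sub]
  have hω1 : |ω (F uαδ - F ubar)| ≤ K * t := by
    rw [hKdef, htdef]
    simpa [Real.norm_eq_abs] using ω.le_opNorm (F uαδ - F ubar)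
  have hω2 : |ω r| ≤ K * ‖r‖ := by
    rw [hKdef]
    simpa [Real.norm_eq_abs] using ω.le_opNorm r
  have habs1 : -(K * t) ≤ ω (F uαδ - F ubar) := neg_le_of_abs_le hω1
  have habs2 : ω r ≤ K * ‖r‖ := le_of_abs_le hω2
  -- key inequality
  have hkey : (1/2) * s^2 + α * (1 - c*K) * D ≤ (1/2) * δ^2 + α * K * t := by
    have hb : b = a + D + x := by rw [hDdef]; ring
    rw [hb, hxval] at hmR
    have p1 : α * (-(K * t)) ≤ α * ω (F uαδ - F ubar) :=
      mul_le_mul_of_nonneg_left habs1 hα.le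
    have p2 : α * ω r ≤ α * (K * ‖r‖) := mul_le_mul_of_nonneg_left habs2 hα.le
    have p3 : α * K * ‖r‖ ≤ α * K * (c * D) :=
      mul_le_mul_of_nonneg_left hconeR (by positivity : (0:ℝ) ≤ α * K)
    linarith [p1, p2, p3, hmR, hFub2]
  -- t ≤ s + δ
  have hts : t ≤ s + δ := by
    calc t ≤ ‖F uαδ - yδ‖ + ‖yδ - F ubar‖ := by
            rw [htdef]
            simpa using norm_sub_le_norm_sub_add_norm_sub (F uαδ) yδ (F ubar)
      _ ≤ s + δ := by
            rw [hub]
            have : ‖yδ - y‖ = ‖y - yδ‖ := norm_sub_rev _ _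
            linarith [hnoise, this.le, this.ge]
  -- bound on s
  have hDterm : 0 ≤ α * (1 - c*K) * D := by positivity
  have hs_bound : s ≤ δ + 2 * α * K := by
    have pts : α * K * t ≤ α * K * (s + δ) :=
      mul_le_mul_of_nonneg_left hts (by positivity : (0:ℝ) ≤ α * K)
    have h1 : (s - α*K)^2 ≤ (δ + α*K)^2 := by nlinarith [hkey, pts, hDterm]
    have h2 := (abs_le_of_sq_le_sq' h1 (by positivity)).2
    linarith
  -- sqrt facts
  set S := Real.sqrt (α^2 * K^2 + δ^2) with hSdef
  have hS0 : 0 ≤ S := Real.sqrt_nonneg _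
  have hSδ : δ ≤ S := by
    rw [hSdef]
    calc δ = Real.sqrt (δ^2) := (Real.sqrt_sq hδ0).symm
      _ ≤ S := Real.sqrt_le_sqrt (by nlinarith)
  clear_value S
  constructor
  · -- first conclusion
    calc t ≤ s + δ := hts
      _ ≤ 2*δ + 2*α*K := by linarith
      _ ≤ 2*α*K + 2*S := by linarith
  · -- second conclusion
    rw [hbreg]
    have goalR : D ≤ (2 / (1 - c * K)) * (δ ^ 2 / (2 * α) + α * K ^ 2 + K * S) := by
      have hDb : α * (1 - c*K) * D ≤ (1/2)*δ^2 + α*K*δ + (1/2)*α^2*K^2 := by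
        nlinarith [hkey, hts, sq_nonneg (s - α*K), mul_le_mul_of_nonneg_left hts ((by positivity : (0:ℝ) ≤ α * K))]
      have hpos : (0:ℝ) < α * (1 - c*K) := by positivity
      rw [← mul_le_mul_iff_right₀ hpos]
      have expand : α * (1 - c*K) * ((2 / (1 - c * K)) * (δ ^ 2 / (2 * α) + α * K ^ 2 + K * S))
          = δ^2 + 2*α^2*K^2 + 2*α*K*S := by
        field_simp
      rw [expand]
      nlinarith [mul_le_mul_of_nonneg_left hSδ ((by positivity : (0:ℝ) ≤ α * K))]
    exact_mod_cast goalR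
end
end

section
/- Let U and H be real Banach spaces, D(F) ⊆ U, F : D(F) → H a map, and h : U → ℝ ∪ {+∞} a proper convex functional. Let ū ∈ D(F) be an h-minimizing solution of F(u) = y. Let A : U → H be a bounded linear operator which is the Gâteaux derivative of F at ū, let ω ∈ H* be such that ξ = A*ω is a subgradient of h at ū, let c > 0, ρ > 0 be such that ‖F(u) − F(ū) − A(u − ū)‖ ≤ c · D_ξ(u, ū) for all u ∈ D(F) with ‖u − ū‖ < ρ, and assume c‖ω‖ < 1. Let α > 0 and let u_α be a minimizer over D(F) of u ↦ (1/2)‖F(u) − y‖² + α h(u) (exact data), with u_α ∈ D(F) and ‖u_α − ū‖ < ρ. Then ‖F(u_α) − F(ū)‖ ≤ 4α‖ω‖ and D_ξ(u_α, ū) ≤ 4α‖ω‖² / (1 − c‖ω‖). -/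
open scoped RealInnerProductSpace

noncomputable section

lemma tikhonov_aux (a b s t e w p q α c : ℝ)
    (hα : 0 < α) (hw : 0 ≤ w) (ht0 : 0 ≤ t) (he0 : 0 ≤ e) (hcw : c * w < 1)
    (key : 1/2 * t^2 + α * a ≤ 1/2 * (0:ℝ)^2 + α * b)
    (hsg : 0 ≤ a - b - s)
    (hEb : e ≤ c * (a - b - s))
    (hx : s = p - q)
    (hp : |p| ≤ w * t) (hq : |q| ≤ w * e) :
    t ≤ 4 * α * w ∧ a - b - s ≤ 4 * α * w ^ 2 / (1 - c * w) := by
  obtain ⟨hp1, hp2⟩ := abs_le.mp hp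
  obtain ⟨hq1, hq2⟩ := abs_le.mp hq
  have h4 : -s ≤ w * t + w * (c * (a - b - s)) := by
    have h5 := mul_le_mul_of_nonneg_left hEb hw
    linarith [hx]
  have main : 1/2 * t^2 + α * (1 - c*w) * (a - b - s) ≤ α * w * t := by
    nlinarith [mul_le_mul_of_nonneg_left h4 hα.le, key]
  have ht2 : t ≤ 2 * α * w := by
    nlinarith [main, mul_nonneg (mul_nonneg hα.le (by linarith : (0:ℝ) ≤ 1 - c*w)) hsg, ht0,
      mul_nonneg hα.le hw]
  constructor
  · linarith [mul_nonneg hα.le hw]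
  · rw [le_div_iff₀ (by linarith : (0:ℝ) < 1 - c * w)]
    nlinarith [main, mul_le_mul_of_nonneg_left ht2 (mul_nonneg hα.le hw), sq_nonneg t,
      mul_nonneg (mul_nonneg hα.le hα.le) (mul_nonneg hw hw)]

/-- convergence for nonlinear Tikhonov regularization with exact
data under the source condition of type I (`F'(ū)* ω ∈ ∂h(ū)`, `ω ∈ H*`). -/
theorem tikhonov_nonlinear_convergence_typeI
    {U H : Type*} [NormedAddCommGroup U] [NormedSpace ℝ U] [CompleteSpace U]
    [NormedAddCommGroup H] [NormedSpace ℝ H] [CompleteSpace H]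
    (DF : Set U) (F : U → H) (h : U → EReal) (hP : ProperConvex h)
    (y : H)
    (ubar : U) (hubarD : ubar ∈ DF) (hub : F ubar = y)
    (hubmin : ∀ u ∈ DF, F u = y → h ubar ≤ h u)
    (A : U →L[ℝ] H)
    (hA : ∀ v : U, HasDerivAt (fun t : ℝ => F (ubar + t • v)) (A v) 0)
    (ω : H →L[ℝ] ℝ) (ξ : U →L[ℝ] ℝ) (hξω : ∀ v, ξ v = ω (A v))
    (hξ : IsSubgradientAt h ξ ubar)
    (c ρ : ℝ) (hc : 0 < c) (hρ : 0 < ρ)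
    (hcone : ∀ u ∈ DF, ‖u - ubar‖ < ρ →
      ((‖F u - F ubar - A (u - ubar)‖ : ℝ) : EReal) ≤ ((c : ℝ) : EReal) * bregman h ξ u ubar)
    (hcω : c * ‖ω‖ < 1)
    (α : ℝ) (hα : 0 < α)
    (uα : U) (huD : uα ∈ DF) (huρ : ‖uα - ubar‖ < ρ)
    (hmin : ∀ u ∈ DF,
      (((1 / 2) * ‖F uα - y‖ ^ 2 : ℝ) : EReal) + ((α : ℝ) : EReal) * h uα ≤
      (((1 / 2) * ‖F u - y‖ ^ 2 : ℝ) : EReal) + ((α : ℝ) : EReal) * h u) :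
    ‖F uα - F ubar‖ ≤ 4 * α * ‖ω‖ ∧
      bregman h ξ uα ubar ≤ ((4 * α * ‖ω‖ ^ 2 / (1 - c * ‖ω‖) : ℝ) : EReal) := by
  obtain ⟨hbot, ⟨v0, hv0⟩, -⟩ := hP
  have hub_top : h ubar ≠ ⊤ := by
    intro htop
    have h1 := hξ v0
    rw [htop, EReal.top_add_of_ne_bot (EReal.coe_ne_bot _)] at h1
    exact hv0 (top_le_iff.mp h1)
  obtain ⟨b, hubeq⟩ : ∃ b : ℝ, h ubar = (b : EReal) :=
    ⟨(h ubar).toReal, (EReal.coe_toReal hub_top (hbot ubar)).symm⟩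
  have hmin0 := hmin ubar hubarD
  rw [hub, sub_self, norm_zero, hubeq] at hmin0
  have hua_top : h uα ≠ ⊤ := by
    intro htop
    rw [htop, EReal.mul_top_of_pos (by exact_mod_cast hα),
      EReal.add_top_of_ne_bot (EReal.coe_ne_bot _), top_le_iff, ← EReal.coe_mul] at hmin0
    exact EReal.coe_ne_top _ hmin0
  obtain ⟨a, huaeq⟩ : ∃ a : ℝ, h uα = (a : EReal) :=
    ⟨(h uα).toReal, (EReal.coe_toReal hua_top (hbot uα)).symm⟩
  rw [huaeq] at hmin0
  have key1 : (1/2) * ‖F uα - y‖^2 + α * a ≤ (1/2) * (0:ℝ)^2 + α * b := by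
    exact_mod_cast hmin0
  have hsg : b + ξ (uα - ubar) ≤ a := by
    have h2 := hξ uα
    rw [hubeq, huaeq] at h2
    exact_mod_cast h2
  have hbreg : bregman h ξ uα ubar = ((a - b - ξ (uα - ubar) : ℝ) : EReal) := by
    unfold bregman
    rw [hubeq, huaeq]
    norm_cast
  have hEb : ‖F uα - F ubar - A (uα - ubar)‖ ≤ c * (a - b - ξ (uα - ubar)) := by
    have h2 := hcone uα huD huρ
    rw [hbreg] at h2
    exact_mod_cast h2
  have hxiv : ξ (uα - ubar) = ω (F uα - y) - ω (F uα - F ubar - A (uα - ubar)) := by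
    rw [hξω, hub, ← map_sub]
    congr 1
    abel
  have hω1 : |ω (F uα - y)| ≤ ‖ω‖ * ‖F uα - y‖ := by
    simpa [Real.norm_eq_abs] using ω.le_opNorm (F uα - y)
  have hω2 : |ω (F uα - F ubar - A (uα - ubar))| ≤ ‖ω‖ * ‖F uα - F ubar - A (uα - ubar)‖ := by
    simpa [Real.norm_eq_abs] using ω.le_opNorm (F uα - F ubar - A (uα - ubar))
  have hmain := tikhonov_aux a b (ξ (uα - ubar)) ‖F uα - y‖ ‖F uα - F ubar - A (uα - ubar)‖
    ‖ω‖ (ω (F uα - y)) (ω (F uα - F ubar - A (uα - ubar))) α c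
    hα (norm_nonneg ω) (norm_nonneg _) (norm_nonneg _) hcω key1
    (by linarith) hEb hxiv hω1 hω2
  have hFF : F uα - F ubar = F uα - y := by rw [hub]
  constructor
  · rw [hFF]
    exact hmain.1
  · rw [hbreg]
    exact_mod_cast hmain.2
end
end

section
/- Let U be a real Banach space, H a real Hilbert space, D(F) ⊆ U, F : D(F) → H a map, and h : U → ℝ ∪ {+∞} a proper convex functional. Let y, y^δ ∈ H with ‖y − y^δ‖ ≤ δ, and let ū ∈ D(F) be an h-minimizing solution of F(u) = y. Let A : U → H be a bounded linear operator which is the Gâteaux derivative of F at ū, let ω ∈ U be such that ξ = A*A ω (i.e. ξ(v) = ⟨A ω, A v⟩ for all v ∈ U) is a subgradient of h at ū, let c > 0, ρ > 0 be such that ‖F(u) − F(ū) − A(u − ū)‖ ≤ c · D_ξ(u, ū) for all u ∈ D(F) with ‖u − ū‖ < ρ, and assume c‖A ω‖ < 1. Let α > 0, set s = D_ξ(ū − αω, ū) and g(α, δ) = δ + √((δ + c s)² + 2 α s (1 + c‖A ω‖)), and let u_α^δ be a minimizer over D(F) of J_α(u) = (1/2)‖F(u) − y^δ‖² + α h(u).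 Assume additionally ū − αω ∈ D(F), ‖(ū − αω) − ū‖ < ρ, u_α^δ ∈ D(F) and ‖u_α^δ − ū‖ < ρ. Then ‖F(u_α^δ) − F(ū)‖ ≤ α‖A ω‖ + g(α, δ), and D_ξ(u_α^δ, ū) ≤ [ α s + (c s)²/2 + δ g(α, δ) + c s (δ + α‖A ω‖) ] / ( α (1 − c‖A ω‖) ). -/
open scoped RealInnerProductSpace

noncomputable section

/-- stability for nonlinear Tikhonov regularization under the
source condition of type II (`F'(ū)* F'(ū) ω ∈ ∂h(ū)`, `ω ∈ U`). -/
theorem tikhonov_nonlinear_stability_typeII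
    {U H : Type*} [NormedAddCommGroup U] [NormedSpace ℝ U] [CompleteSpace U]
    [NormedAddCommGroup H] [InnerProductSpace ℝ H] [CompleteSpace H]
    (DF : Set U) (F : U → H) (h : U → EReal) (hP : ProperConvex h)
    (y yδ : H) (δ : ℝ) (hnoise : ‖y - yδ‖ ≤ δ)
    (ubar : U) (hubarD : ubar ∈ DF) (hub : F ubar = y)
    (hubmin : ∀ u ∈ DF, F u = y → h ubar ≤ h u)
    (A : U →L[ℝ] H)
    (hA : ∀ v : U, HasDerivAt (fun t : ℝ => F (ubar + t • v)) (A v) 0)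
    (ω : U) (ξ : U →L[ℝ] ℝ) (hξω : ∀ v, ξ v = ⟪A ω, A v⟫)
    (hξ : IsSubgradientAt h ξ ubar)
    (c ρ : ℝ) (hc : 0 < c) (hρ : 0 < ρ)
    (hcone : ∀ u ∈ DF, ‖u - ubar‖ < ρ →
      ((‖F u - F ubar - A (u - ubar)‖ : ℝ) : EReal) ≤ ((c : ℝ) : EReal) * bregman h ξ u ubar)
    (hcω : c * ‖A ω‖ < 1)
    (α : ℝ) (hα : 0 < α)
    (s : ℝ) (hs : (s : EReal) = bregman h ξ (ubar - α • ω) ubar)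
    (hωD : ubar - α • ω ∈ DF) (hωρ : ‖(ubar - α • ω) - ubar‖ < ρ)
    (uαδ : U) (huD : uαδ ∈ DF) (huρ : ‖uαδ - ubar‖ < ρ)
    (hmin : ∀ u ∈ DF,
      (((1 / 2) * ‖F uαδ - yδ‖ ^ 2 : ℝ) : EReal) + ((α : ℝ) : EReal) * h uαδ ≤
      (((1 / 2) * ‖F u - yδ‖ ^ 2 : ℝ) : EReal) + ((α : ℝ) : EReal) * h u) :
    ‖F uαδ - F ubar‖ ≤ α * ‖A ω‖
        + (δ + Real.sqrt ((δ + c * s) ^ 2 + 2 * α * s * (1 + c * ‖A ω‖))) ∧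
      bregman h ξ uαδ ubar ≤
        (((α * s + (c * s) ^ 2 / 2
            + δ * (δ + Real.sqrt ((δ + c * s) ^ 2 + 2 * α * s * (1 + c * ‖A ω‖)))
            + c * s * (δ + α * ‖A ω‖)) / (α * (1 - c * ‖A ω‖)) : ℝ) : EReal) := by

  obtain ⟨hbot, ⟨u₀, hu₀⟩, -⟩ := hP
  have hδ0 : (0:ℝ) ≤ δ := le_trans (norm_nonneg _) hnoise
  have hk0 : (0:ℝ) ≤ ‖A ω‖ := norm_nonneg _
  -- `h ubar` is finite
  have hub_ne_top : h ubar ≠ ⊤ := by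
    intro hT
    apply hu₀
    have h1 := hξ u₀
    rw [hT, EReal.top_add_coe] at h1
    exact top_le_iff.mp h1
  obtain ⟨b, hub_eq⟩ : ∃ b : ℝ, h ubar = (b : EReal) :=
    ⟨(h ubar).toReal, (EReal.coe_toReal hub_ne_top (hbot ubar)).symm⟩
  -- `h (ubar - α • ω)` is finite
  have hv1_ne_top : h (ubar - α • ω) ≠ ⊤ := by
    intro hT
    have h2 : (s : EReal) = ⊤ := by
      rw [hs, bregman, hT, hub_eq, EReal.top_sub_coe, EReal.top_sub_coe]
    exact EReal.coe_ne_top s h2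
  obtain ⟨w, hw_eq⟩ : ∃ w : ℝ, h (ubar - α • ω) = (w : EReal) :=
    ⟨(h (ubar - α • ω)).toReal, (EReal.coe_toReal hv1_ne_top (hbot _)).symm⟩
  have hs' : s = w - b - ξ ((ubar - α • ω) - ubar) := by
    have h2 : (s : EReal) = ((w - b - ξ ((ubar - α • ω) - ubar) : ℝ) : EReal) := by
      rw [hs, bregman, hw_eq, hub_eq]; norm_cast
    exact_mod_cast h2
  -- `h uαδ` is finite
  have hu_ne_top : h uαδ ≠ ⊤ := by
    intro hT
    have h3 := hmin (ubar - α • ω) hωD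
    rw [hT, hw_eq, EReal.coe_mul_top_of_pos hα] at h3
    rw [EReal.coe_add_top] at h3
    have h4 : ((1 / 2 * ‖F (ubar - α • ω) - yδ‖ ^ 2 : ℝ) : EReal) + ((α : ℝ) : EReal) * ((w : ℝ) : EReal)
        = (((1 / 2 * ‖F (ubar - α • ω) - yδ‖ ^ 2 + α * w : ℝ)) : EReal) := by norm_cast
    rw [h4] at h3
    exact EReal.coe_ne_top _ (top_le_iff.mp h3)
  obtain ⟨m, hm_eq⟩ : ∃ m : ℝ, h uαδ = (m : EReal) :=
    ⟨(h uαδ).toReal, (EReal.coe_toReal hu_ne_top (hbot _)).symm⟩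
  have hmin' : 1/2*‖F uαδ - yδ‖^2 + α*m ≤ 1/2*‖F (ubar - α • ω) - yδ‖^2 + α*w := by
    have h3 := hmin (ubar - α • ω) hωD
    rw [hm_eq, hw_eq] at h3
    exact_mod_cast h3
  set d : ℝ := m - b - ξ (uαδ - ubar) with hd_def
  have hd_eq : bregman h ξ uαδ ubar = ((d : ℝ) : EReal) := by
    rw [bregman, hm_eq, hub_eq, hd_def]; norm_cast
  have hd0 : 0 ≤ d := by
    have h4 := hξ uαδ
    rw [hm_eq, hub_eq] at h4
    have h5 : b + ξ (uαδ - ubar) ≤ m := by exact_mod_cast h4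
    rw [hd_def]; linarith
  have hs0 : 0 ≤ s := by
    have h4 := hξ (ubar - α • ω)
    rw [hw_eq, hub_eq] at h4
    have h5 : b + ξ ((ubar - α • ω) - ubar) ≤ w := by exact_mod_cast h4
    rw [hs']; linarith
  have hR2 : ‖F uαδ - F ubar - A (uαδ - ubar)‖ ≤ c * d := by
    have h6 := hcone uαδ huD huρ
    rw [hd_eq] at h6
    exact_mod_cast h6
  have hAsm : A ((ubar - α • ω) - ubar) = -(α • A ω) := by
    rw [sub_sub_cancel_left, map_neg, map_smul]
  have hR1 : ‖F (ubar - α • ω) - F ubar + α • A ω‖ ≤ c * s := by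
    have h6 := hcone _ hωD hωρ
    rw [← hs] at h6
    have h7 : ‖F (ubar - α • ω) - F ubar - A ((ubar - α • ω) - ubar)‖ ≤ c * s := by
      exact_mod_cast h6
    rwa [hAsm, sub_neg_eq_add] at h7
  set k := ‖A ω‖ with hk_def
  have hkk : ξ ω = k^2 := by rw [hξω, real_inner_self_eq_norm_sq]
  have hw' : w = s + b - α * k^2 := by
    have h8 : ξ ((ubar - α • ω) - ubar) = -(α * k^2) := by
      rw [sub_sub_cancel_left, map_neg, map_smul, smul_eq_mul, hkk]
    rw [h8] at hs'
    linarith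
  set p := F uαδ - yδ with hp_def
  set e := F ubar - yδ with he_def
  set R1 := F (ubar - α • ω) - F ubar + α • A ω with hR1_def
  set R2 := F uαδ - F ubar - A (uαδ - ubar) with hR2_def
  clear_value d k p e R1 R2
  have hq_vec : F (ubar - α • ω) - yδ = (R1 + e) - α • A ω := by
    rw [hR1_def, he_def]; abel
  have hsm : ‖α • A ω‖ = α * k := by
    rw [norm_smul, Real.norm_eq_abs, abs_of_pos hα, ← hk_def]
  have hiq : ‖F (ubar - α • ω) - yδ‖^2
      = ‖R1 + e‖^2 - 2*α*(⟪A ω, R1⟫ + ⟪A ω, e⟫) + α^2*k^2 := by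
    rw [hq_vec, norm_sub_sq_real, real_inner_smul_right, inner_add_left, hsm,
      real_inner_comm R1, real_inner_comm e]
    ring
  have hir : ‖p + α • A ω‖^2 = ‖p‖^2 + 2*α*⟪A ω, p⟫ + α^2*k^2 := by
    rw [norm_add_sq_real, real_inner_smul_right, hsm, real_inner_comm p]
    ring
  have hiξ : ξ (uαδ - ubar) = ⟪A ω, p⟫ - ⟪A ω, e⟫ - ⟪A ω, R2⟫ := by
    have hAv : A (uαδ - ubar) = p - e - R2 := by rw [hp_def, he_def, hR2_def]; abel
    rw [hξω, hAv, inner_sub_right, inner_sub_right]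
  have hcs0 : (0:ℝ) ≤ c * s := mul_nonneg hc.le hs0
  have hcd0 : (0:ℝ) ≤ c * d := mul_nonneg hc.le hd0
  have hne : ‖e‖ ≤ δ := by rw [he_def, hub]; exact hnoise
  have hn2 : ‖R1 + e‖ ≤ c*s + δ :=
    le_trans (norm_add_le _ _) (add_le_add hR1 hne)
  have hx3 : -(k*(c*s)) ≤ ⟪A ω, R1⟫ := by
    have h9 : |⟪A ω, R1⟫| ≤ k * (c*s) := by
      calc |⟪A ω, R1⟫| ≤ ‖A ω‖ * ‖R1‖ := abs_real_inner_le_norm _ _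
        _ = k * ‖R1‖ := by rw [← hk_def]
        _ ≤ k * (c*s) := mul_le_mul_of_nonneg_left hR1 hk0
    linarith [(abs_le.mp h9).1]
  have hx4 : ⟪A ω, R2⟫ ≤ k*(c*d) := by
    have h9 : |⟪A ω, R2⟫| ≤ k * (c*d) := by
      calc |⟪A ω, R2⟫| ≤ ‖A ω‖ * ‖R2‖ := abs_real_inner_le_norm _ _
        _ = k * ‖R2‖ := by rw [← hk_def]
        _ ≤ k * (c*d) := mul_le_mul_of_nonneg_left hR2 hk0
    linarith [(abs_le.mp h9).2]
  have him : m = d + b + (⟪A ω, p⟫ - ⟪A ω, e⟫ - ⟪A ω, R2⟫) := by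
    rw [hd_def, hiξ]; ring
  have key : 1/2*‖p + α • A ω‖^2 + α*d
      ≤ 1/2*‖R1+e‖^2 - α*⟪A ω, R1⟫ + α*⟪A ω, R2⟫ + α*s := by
    rw [him, hw', hiq] at hmin'
    rw [hir]
    ring_nf at hmin' ⊢
    linarith
  have H2 : 1/2*‖p + α • A ω‖^2 + α*(1-c*k)*d ≤ 1/2*(c*s+δ)^2 + α*(k*(c*s)) + α*s := by
    have e2 : ‖R1+e‖^2 ≤ (c*s+δ)^2 := by
      have := pow_le_pow_left₀ (norm_nonneg (R1+e)) hn2 2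
      simpa using this
    have e3 : α * -⟪A ω, R1⟫ ≤ α*(k*(c*s)) :=
      mul_le_mul_of_nonneg_left (by linarith [hx3]) hα.le
    have e4 : α*⟪A ω, R2⟫ ≤ α*(k*(c*d)) :=
      mul_le_mul_of_nonneg_left hx4 hα.le
    have hring : α*(1-c*k)*d = α*d - α*(k*(c*d)) := by ring
    have hring2 : α * -⟪A ω, R1⟫ = -(α*⟪A ω, R1⟫) := by ring
    rw [hring2] at e3
    linarith [key, e2, e3, e4]
  set G := Real.sqrt ((δ + c * s) ^ 2 + 2 * α * s * (1 + c * k)) with hG_def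
  clear_value G
  have hG0 : 0 ≤ G := by rw [hG_def]; exact Real.sqrt_nonneg _
  have h1ck : (0:ℝ) ≤ 1 + c*k := by positivity
  have hin0 : (0:ℝ) ≤ (δ + c * s) ^ 2 + 2 * α * s * (1 + c * k) := by
    have h11 : (0:ℝ) ≤ 2*α*s*(1+c*k) :=
      mul_nonneg (mul_nonneg (by linarith) hs0) h1ck
    linarith [sq_nonneg (δ + c*s)]
  have hG2 : G^2 = (δ + c * s) ^ 2 + 2 * α * s * (1 + c * k) := by
    rw [hG_def]; exact Real.sq_sqrt hin0
  have hdpos : 0 ≤ α*(1-c*k)*d :=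
    mul_nonneg (mul_nonneg hα.le (by linarith)) hd0
  have hrG : ‖p + α • A ω‖ ≤ G := by
    have hr2 : ‖p + α • A ω‖^2 ≤ (δ + c * s) ^ 2 + 2 * α * s * (1 + c * k) := by
      have hring3 : (δ + c*s)^2 + 2*α*s*(1+c*k)
          = (c*s+δ)^2 + 2*(α*(k*(c*s))) + 2*(α*s) := by ring
      linarith [H2, hdpos]
    calc ‖p + α • A ω‖ = Real.sqrt (‖p + α • A ω‖^2) := (Real.sqrt_sq (norm_nonneg _)).symm
      _ ≤ G := by rw [hG_def]; exact Real.sqrt_le_sqrt hr2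
  constructor
  · have hpe : F uαδ - F ubar = (p + α • A ω) - α • A ω - e := by
      rw [hp_def, he_def]; abel
    calc ‖F uαδ - F ubar‖ = ‖(p + α • A ω) - α • A ω - e‖ := by rw [hpe]
      _ ≤ ‖(p + α • A ω) - α • A ω‖ + ‖e‖ := norm_sub_le _ _
      _ ≤ ‖p + α • A ω‖ + ‖α • A ω‖ + ‖e‖ := by linarith [norm_sub_le (p + α • A ω) (α • A ω)]
      _ ≤ G + α*k + δ := by rw [hsm]; linarith
      _ ≤ α * k + (δ + G) := by linarith
  · rw [hd_eq]
    have hP2 : (0:ℝ) < α*(1-c*k) := mul_pos hα (by linarith)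
    have hfin : d ≤ (α * s + (c * s) ^ 2 / 2 + δ * (δ + G) + c * s * (δ + α * k)) / (α * (1 - c * k)) := by
      rw [le_div_iff₀ hP2]
      have hδG : 0 ≤ δ * G := mul_nonneg hδ0 hG0
      have h10 : α*(1-c*k)*d ≤ 1/2*(c*s+δ)^2 + α*(k*(c*s)) + α*s := by
        linarith [H2, sq_nonneg ‖p + α • A ω‖]
      linarith [h10, hδG, sq_nonneg δ]
    exact_mod_cast hfin
end
end

section
/- Let U be a real Banach space, H a real Hilbert space, D(F) ⊆ U, F : D(F) → H a map, and h : U → ℝ ∪ {+∞} a proper convex functional. Let ū ∈ D(F) be an h-minimizing solution of F(u) = y. Let A : U → H be a bounded linear operator which is the Gâteaux derivative of F at ū, let ω ∈ U be such that ξ = A*A ω (i.e. ξ(v) = ⟨A ω, A v⟩) is a subgradient of h at ū, let c > 0, ρ > 0 be such that ‖F(u) − F(ū) − A(u − ū)‖ ≤ c · D_ξ(u, ū) for all u ∈ D(F) with ‖u − ū‖ < ρ, and assume c‖A ω‖ < 1. Let α > 0, set s = D_ξ(ū − αω, ū), and let u_α be a minimizer over D(F) of u ↦ (1/2)‖F(u)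 − y‖² + α h(u) (exact data). Assume additionally ū − αω ∈ D(F), ‖(ū − αω) − ū‖ < ρ, u_α ∈ D(F) and ‖u_α − ū‖ < ρ. Then ‖F(u_α) − F(ū)‖ ≤ α‖A ω‖ + √((c s)² + 2 α s (1 + c‖A ω‖)), and D_ξ(u_α, ū) ≤ [ α s + (c s)²/2 + α c s ‖A ω‖ ] / ( α (1 − c‖A ω‖) ). -/
open scoped RealInnerProductSpace

noncomputable section

private lemma key_alg (r d B p ia io eo nw s c α : ℝ)
    (hbase : 1/2 * r^2 + α * (d + B + (p - ia)) ≤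
      1/2 * (eo^2 - 2*(α*io) + α^2*nw^2) + α * (s + B - α*nw^2))
    (b1 : α * ia ≤ α * (nw * (c*d)))
    (b2 : α * -(c*s*nw) ≤ α * io)
    (b3 : α * -(nw*r) ≤ α * p)
    (b4 : eo^2 ≤ (c*s)^2) :
    1/2 * (r - α*nw)^2 + α*(1 - c*nw)*d ≤ α*s + (c*s)^2/2 + α*c*s*nw := by
  linarith



set_option maxHeartbeats 2000000 in
/-- convergence for nonlinear Tikhonov regularization with exact
data under the source condition of type II (`F'(ū)* F'(ū) ω ∈ ∂h(ū)`). -/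
theorem tikhonov_nonlinear_convergence_typeII
    {U H : Type*} [NormedAddCommGroup U] [NormedSpace ℝ U] [CompleteSpace U]
    [NormedAddCommGroup H] [InnerProductSpace ℝ H] [CompleteSpace H]
    (DF : Set U) (F : U → H) (h : U → EReal) (hP : ProperConvex h)
    (y : H)
    (ubar : U) (hubarD : ubar ∈ DF) (hub : F ubar = y)
    (hubmin : ∀ u ∈ DF, F u = y → h ubar ≤ h u)
    (A : U →L[ℝ] H)
    (hA : ∀ v : U, HasDerivAt (fun t : ℝ => F (ubar + t • v)) (A v) 0)
    (ω : U) (ξ : U →L[ℝ] ℝ) (hξω : ∀ v, ξ v = ⟪A ω, A v⟫)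
    (hξ : IsSubgradientAt h ξ ubar)
    (c ρ : ℝ) (hc : 0 < c) (hρ : 0 < ρ)
    (hcone : ∀ u ∈ DF, ‖u - ubar‖ < ρ →
      ((‖F u - F ubar - A (u - ubar)‖ : ℝ) : EReal) ≤ ((c : ℝ) : EReal) * bregman h ξ u ubar)
    (hcω : c * ‖A ω‖ < 1)
    (α : ℝ) (hα : 0 < α)
    (s : ℝ) (hs : (s : EReal) = bregman h ξ (ubar - α • ω) ubar)
    (hωD : ubar - α • ω ∈ DF) (hωρ : ‖(ubar - α • ω) - ubar‖ < ρ)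
    (uα : U) (huD : uα ∈ DF) (huρ : ‖uα - ubar‖ < ρ)
    (hmin : ∀ u ∈ DF,
      (((1 / 2) * ‖F uα - y‖ ^ 2 : ℝ) : EReal) + ((α : ℝ) : EReal) * h uα ≤
      (((1 / 2) * ‖F u - y‖ ^ 2 : ℝ) : EReal) + ((α : ℝ) : EReal) * h u) :
    ‖F uα - F ubar‖ ≤ α * ‖A ω‖
        + Real.sqrt ((c * s) ^ 2 + 2 * α * s * (1 + c * ‖A ω‖)) ∧
      bregman h ξ uα ubar ≤
        (((α * s + (c * s) ^ 2 / 2 + α * c * s * ‖A ω‖)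
            / (α * (1 - c * ‖A ω‖)) : ℝ) : EReal) := by
  obtain ⟨hbot, ⟨u0, hu0⟩, -⟩ := hP
  -- finiteness of h ubar
  have hB_top : h ubar ≠ ⊤ := by
    intro htop
    have h1 := hξ u0
    rw [htop, EReal.top_add_coe] at h1
    exact hu0 (top_le_iff.mp h1)
  set B := (h ubar).toReal with hBdef
  have hB : h ubar = (B : EReal) := (EReal.coe_toReal hB_top (hbot ubar)).symm
  -- finiteness of h (ubar - α • ω)
  have hw_top : h (ubar - α • ω) ≠ ⊤ := by
    intro htop
    rw [bregman, htop, hB, EReal.top_sub_coe, EReal.top_sub_coe] at hs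
    exact EReal.coe_ne_top s hs
  set W := (h (ubar - α • ω)).toReal with hWdef
  have hW : h (ubar - α • ω) = (W : EReal) := (EReal.coe_toReal hw_top (hbot _)).symm
  -- finiteness of h uα
  have hm := hmin (ubar - α • ω) hωD
  have hu_top : h uα ≠ ⊤ := by
    intro htop
    rw [htop, EReal.coe_mul_top_of_pos (by exact_mod_cast hα), EReal.add_top_of_ne_bot (EReal.coe_ne_bot _)] at hm
    rw [hW, ← EReal.coe_mul, ← EReal.coe_add, top_le_iff] at hm
    exact EReal.coe_ne_top _ hm
  set hu := (h uα).toReal with hudef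
  have hhu : h uα = (hu : EReal) := (EReal.coe_toReal hu_top (hbot _)).symm
  -- real version of hmin
  rw [hW, hhu, ← EReal.coe_mul, ← EReal.coe_mul, ← EReal.coe_add, ← EReal.coe_add,
    EReal.coe_le_coe_iff] at hm
  -- real version of s
  have hsr : s = W - B - ξ ((ubar - α • ω) - ubar) := by
    have h2 := hs
    rw [bregman, hW, hB, ← EReal.coe_sub, ← EReal.coe_sub] at h2
    exact_mod_cast h2
  -- Bregman distance of uα as a real
  set d : ℝ := hu - B - ξ (uα - ubar) with hd
  have hbreg : bregman h ξ uα ubar = (d : EReal) := by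
    rw [bregman, hhu, hB, ← EReal.coe_sub, ← EReal.coe_sub]
  -- nonnegativity of d and s
  have hd0 : 0 ≤ d := by
    have := hξ uα
    rw [hB, hhu, ← EReal.coe_add, EReal.coe_le_coe_iff] at this
    simp only [hd]; linarith
  have hs0 : 0 ≤ s := by
    have := hξ (ubar - α • ω)
    rw [hB, hW, ← EReal.coe_add, EReal.coe_le_coe_iff] at this
    rw [hsr]; linarith
  -- real version of hcone at uα
  have hconeα : ‖F uα - F ubar - A (uα - ubar)‖ ≤ c * d := by
    have := hcone uα huD huρ
    rw [hbreg, ← EReal.coe_mul, EReal.coe_le_coe_iff] at this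
    exact this
  have hconeω : ‖F (ubar - α • ω) - F ubar - A ((ubar - α • ω) - ubar)‖ ≤ c * s := by
    have := hcone _ hωD hωρ
    rw [← hs, ← EReal.coe_mul, EReal.coe_le_coe_iff] at this
    exact this
  -- notation
  set w := A ω with hwdef
  -- ξ applied to differences
  have hAsub : A ((ubar - α • ω) - ubar) = -(α • w) := by
    rw [show (ubar - α • ω) - ubar = -(α • ω) by abel, map_neg, map_smul]
  have hξω2 : ξ ((ubar - α • ω) - ubar) = -(α * ‖w‖^2) := by
    rw [hξω, hAsub, inner_neg_right, inner_smul_right, real_inner_self_eq_norm_sq]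
  set Eα := F uα - F ubar - A (uα - ubar) with hEαdef
  set Eω := F (ubar - α • ω) - F ubar + α • w with hEωdef
  have hEωnorm : ‖Eω‖ ≤ c * s := by
    have : Eω = F (ubar - α • ω) - F ubar - A ((ubar - α • ω) - ubar) := by
      rw [hAsub, hEωdef]; abel
    rw [this]; exact hconeω
  -- ξ (uα - ubar)
  have hξuα : ξ (uα - ubar) = ⟪w, F uα - F ubar⟫ - ⟪w, Eα⟫ := by
    rw [hξω, show A (uα - ubar) = (F uα - F ubar) - Eα by rw [hEαdef]; abel,
      inner_sub_right]
  -- expand the norm on the rhs of hm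
  have hFω : F (ubar - α • ω) - F ubar = Eω - α • w := by rw [hEωdef]; abel
  have hnorm : ‖F (ubar - α • ω) - F ubar‖^2
      = ‖Eω‖^2 - 2 * (α * ⟪Eω, w⟫) + α^2 * ‖w‖^2 := by
    rw [hFω, norm_sub_sq_real, inner_smul_right, norm_smul]
    simp [abs_of_pos hα]; ring
  -- assemble real baseline inequality
  rw [← hub] at hm
  have hW_eq : W = s + B - α * ‖w‖^2 := by rw [hsr, hξω2]; ring
  have hu_eq : hu = d + B + ξ (uα - ubar) := by rw [hd]; ring
  set r := ‖F uα - F ubar‖ with hrdef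
  have hbase : (1/2) * r^2 + α * (d + B + (⟪w, F uα - F ubar⟫ - ⟪w, Eα⟫))
      ≤ (1/2) * (‖Eω‖^2 - 2 * (α * ⟪Eω, w⟫) + α^2 * ‖w‖^2) + α * (s + B - α * ‖w‖^2) := by
    calc (1/2) * r^2 + α * (d + B + (⟪w, F uα - F ubar⟫ - ⟪w, Eα⟫))
        = (1/2) * ‖F uα - F ubar‖^2 + α * hu := by rw [hu_eq, hξuα]
      _ ≤ (1/2) * ‖F (ubar - α • ω) - F ubar‖^2 + α * W := hm
      _ = _ := by rw [hnorm, hW_eq]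
  -- inner product bounds
  have hiα : |⟪w, Eα⟫| ≤ ‖w‖ * (c * d) :=
    le_trans (abs_real_inner_le_norm w Eα) (by
      have := hconeα
      nlinarith [norm_nonneg w])
  have hiω : |⟪Eω, w⟫| ≤ (c * s) * ‖w‖ :=
    le_trans (abs_real_inner_le_norm Eω w) (by nlinarith [norm_nonneg w, norm_nonneg Eω])
  have hip : |⟪w, F uα - F ubar⟫| ≤ ‖w‖ * r :=
    abs_real_inner_le_norm w _
  have hiα' : ⟪w, Eα⟫ ≤ ‖w‖ * (c * d) := le_trans (le_abs_self _) hiα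
  have hiω' : -((c * s) * ‖w‖) ≤ ⟪Eω, w⟫ := neg_le_of_abs_le hiω
  have hip' : -(‖w‖ * r) ≤ ⟪w, F uα - F ubar⟫ := neg_le_of_abs_le hip
  -- key inequality: (1/2)(r - α‖w‖)² + α(1 - c‖w‖) d ≤ K
  have hkey : (1/2) * (r - α * ‖w‖)^2 + α * (1 - c * ‖w‖) * d
      ≤ α * s + (c * s)^2 / 2 + α * c * s * ‖w‖ := by
    have b1 : α * ⟪w, Eα⟫ ≤ α * (‖w‖ * (c * d)) := mul_le_mul_of_nonneg_left hiα' hα.le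
    have b2 : α * (-((c * s) * ‖w‖)) ≤ α * ⟪Eω, w⟫ := mul_le_mul_of_nonneg_left hiω' hα.le
    have b3 : α * (-(‖w‖ * r)) ≤ α * ⟪w, F uα - F ubar⟫ := mul_le_mul_of_nonneg_left hip' hα.le
    have b4 : ‖Eω‖^2 ≤ (c * s)^2 := by nlinarith [hEωnorm, norm_nonneg Eω]
    exact key_alg r d B ⟪w, F uα - F ubar⟫ ⟪w, Eα⟫ ⟪Eω, w⟫ ‖Eω‖ ‖w‖ s c α hbase b1 b2 b3 b4
  have hden : 0 < α * (1 - c * ‖w‖) := by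
    apply mul_pos hα; linarith
  constructor
  · -- first claim
    have h2K : (r - α * ‖w‖)^2 ≤ (c * s)^2 + 2 * α * s * (1 + c * ‖w‖) := by
      nlinarith [hkey, mul_nonneg hden.le hd0]
    have := Real.sqrt_le_sqrt h2K
    rw [Real.sqrt_sq_eq_abs] at this
    have h3 : r - α * ‖w‖ ≤ Real.sqrt ((c * s)^2 + 2 * α * s * (1 + c * ‖w‖)) :=
      le_trans (le_abs_self _) this
    linarith
  · -- second claim
    rw [hbreg, EReal.coe_le_coe_iff]
    rw [le_div_iff₀ hden]
    nlinarith [hkey, sq_nonneg (r - α * ‖w‖)]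
end
end

section
/- Let U be a real Banach space, H a real Hilbert space, D(F) ⊆ U, F : D(F) → H a map, and h : U → ℝ ∪ {+∞} a proper convex functional that is finite and twice Fréchet differentiable on an open neighborhood of ū with ⟨h''(u)v, v⟩ ≤ M‖v‖² for all u in this neighborhood and all v ∈ U, for some M > 0. Let ū ∈ D(F) be an h-minimizing solution of F(u) = y, let A : U → H be a bounded linear operator which is the Gâteaux derivative of F at ū, let ω ∈ U be such that ξ = A*A ω ∈ ∂h(ū) with ξ = h'(ū), let c > 0, ρ > 0 be such that ‖F(u) − F(ū) − A(u − ū)‖ ≤ c · D_ξ(u, ū) for all u ∈ D(F) with ‖u − ū‖ < ρ, and assume c‖A ω‖ < 1. Assume further that for all sufficiently small α > 0 the element ū − αω belongs to D(F) ∩ B_ρ(ū) and the minimizers below belong to D(F) ∩ B_ρ(ū). Then there exist C > 0 and δ₀ > 0 such that for every δ ∈ (0, δ₀], every y^δ with ‖y − y^δ‖ ≤ δ, and the choice α = δ^(2/3), every minimizer u_α^δ over D(F) of J_α(u) = (1/2)‖F(u) − y^δ‖² + α h(u) satisfies D_ξ(u_α^δ, ū) ≤ C δ^(4/3); and for exact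 data there exist C' > 0 and α₀ > 0 such that every minimizer u_α of u ↦ (1/2)‖F(u) − y‖² + α h(u) with 0 < α ≤ α₀ satisfies D_ξ(u_α, ū) ≤ C' α². -/
open scoped RealInnerProductSpace

noncomputable section

lemma taylor_aux {U : Type*} [NormedAddCommGroup U] [NormedSpace ℝ U]
    (g : U → ℝ) (g' : U → U →L[ℝ] ℝ) (g'' : U → U →L[ℝ] U →L[ℝ] ℝ)
    (N : Set U)
    (hg' : ∀ u ∈ N, HasFDerivAt g (g' u) u)
    (hg'' : ∀ u ∈ N, HasFDerivAt g' (g'' u) u)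
    (M : ℝ) (hbound : ∀ u ∈ N, ∀ v : U, g'' u v v ≤ M * ‖v‖ ^ 2)
    (x w : U) (hseg : ∀ t ∈ Set.Icc (0:ℝ) 1, x + t • w ∈ N) :
    g (x + w) ≤ g x + g' x w + M / 2 * ‖w‖ ^ 2 := by
  have hpath : ∀ t : ℝ, HasDerivAt (fun s : ℝ => x + s • w) w t := fun t => by
    simpa using ((hasDerivAt_id t).smul_const w).const_add x
  have hDφ : ∀ t ∈ Set.Icc (0:ℝ) 1,
      HasDerivAt (fun s : ℝ => g (x + s • w)) (g' (x + t • w) w) t := fun t ht =>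
    (hg' _ (hseg t ht)).comp_hasDerivAt t (hpath t)
  have hDφ' : ∀ t ∈ Set.Icc (0:ℝ) 1,
      HasDerivAt (fun s : ℝ => g' (x + s • w) w) (g'' (x + t • w) w w) t := fun t ht => by
    have h1 : HasDerivAt (fun s : ℝ => g' (x + s • w)) (g'' (x + t • w) w) t :=
      (hg'' _ (hseg t ht)).comp_hasDerivAt t (hpath t)
    simpa using h1.clm_apply (hasDerivAt_const t w)
  set p := fun t : ℝ => g' x w + M * ‖w‖ ^ 2 * t - g' (x + t • w) w with hp
  have hp0 : p 0 = 0 := by simp [hp]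
  have hDp : ∀ t ∈ Set.Icc (0:ℝ) 1,
      HasDerivAt p (M * ‖w‖ ^ 2 - g'' (x + t • w) w w) t := fun t ht => by
    have h2 : HasDerivAt (fun s : ℝ => g' x w + M * ‖w‖ ^ 2 * s) (M * ‖w‖ ^ 2) t := by
      simpa using ((hasDerivAt_id t).const_mul (M * ‖w‖ ^ 2)).const_add (g' x w)
    exact h2.sub (hDφ' t ht)
  have hpmono : MonotoneOn p (Set.Icc 0 1) := by
    apply monotoneOn_of_deriv_nonneg (convex_Icc 0 1)
    · exact fun t ht => (hDp t ht).continuousAt.continuousWithinAt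
    · intro t ht
      rw [interior_Icc] at ht
      exact ((hDp t (Set.Ioo_subset_Icc_self ht)).differentiableAt).differentiableWithinAt
    · intro t ht
      rw [interior_Icc] at ht
      rw [(hDp t (Set.Ioo_subset_Icc_self ht)).deriv]
      have := hbound (x + t • w) (hseg t (Set.Ioo_subset_Icc_self ht)) w
      linarith
  have hpnonneg : ∀ t ∈ Set.Icc (0:ℝ) 1, 0 ≤ p t := fun t ht => by
    have := hpmono (Set.left_mem_Icc.mpr zero_le_one) ht ht.1
    rwa [hp0] at this
  set f := fun t : ℝ => g x + t * (g' x w) + M * ‖w‖ ^ 2 / 2 * t ^ 2 - g (x + t • w) with hf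
  have hDf : ∀ t ∈ Set.Icc (0:ℝ) 1, HasDerivAt f (p t) t := fun t ht => by
    have h1 : HasDerivAt (fun s : ℝ => g x + s * (g' x w) + M * ‖w‖ ^ 2 / 2 * s ^ 2)
        (g' x w + M * ‖w‖ ^ 2 * t) t := by
      have ha : HasDerivAt (fun s : ℝ => g x + s * (g' x w)) (g' x w) t := by
        simpa using ((hasDerivAt_id t).mul_const (g' x w)).const_add (g x)
      have hb : HasDerivAt (fun s : ℝ => M * ‖w‖ ^ 2 / 2 * s ^ 2) (M * ‖w‖ ^ 2 * t) t := by
        have := (hasDerivAt_pow 2 t).const_mul (M * ‖w‖ ^ 2 / 2)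
        exact this.congr_deriv (by norm_num; ring)
      exact ha.add hb
    have := h1.sub (hDφ t ht)
    exact this
  have hfmono : MonotoneOn f (Set.Icc 0 1) := by
    apply monotoneOn_of_deriv_nonneg (convex_Icc 0 1)
    · exact fun t ht => (hDf t ht).continuousAt.continuousWithinAt
    · intro t ht
      rw [interior_Icc] at ht
      exact ((hDf t (Set.Ioo_subset_Icc_self ht)).differentiableAt).differentiableWithinAt
    · intro t ht
      rw [interior_Icc] at ht
      rw [(hDf t (Set.Ioo_subset_Icc_self ht)).deriv]
      exact hpnonneg t (Set.Ioo_subset_Icc_self ht)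
  have h01 := hfmono (Set.left_mem_Icc.mpr zero_le_one) (Set.right_mem_Icc.mpr zero_le_one)
    zero_le_one
  simp [hf] at h01
  linarith

set_option maxHeartbeats 1000000 in
/-- convergence rates `O(δ^(4/3))` (noisy data, `α = δ^(2/3)`) and
`O(α²)` (exact data) for nonlinear Tikhonov regularization under the source
condition of type II and a bounded second derivative of the penalty. -/
theorem tikhonov_nonlinear_rates_typeII
    {U H : Type*} [NormedAddCommGroup U] [NormedSpace ℝ U] [CompleteSpace U]
    [NormedAddCommGroup H] [InnerProductSpace ℝ H] [CompleteSpace H]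
    (DF : Set U) (F : U → H) (h : U → EReal) (hP : ProperConvex h)
    (y : H)
    (ubar : U) (hubarD : ubar ∈ DF) (hub : F ubar = y)
    (hubmin : ∀ u ∈ DF, F u = y → h ubar ≤ h u)
    (N : Set U) (hNopen : IsOpen N) (hubarN : ubar ∈ N)
    (g : U → ℝ) (hgh : ∀ u ∈ N, h u = (g u : EReal))
    (g' : U → U →L[ℝ] ℝ) (g'' : U → U →L[ℝ] U →L[ℝ] ℝ)
    (hg' : ∀ u ∈ N, HasFDerivAt g (g' u) u)
    (hg'' : ∀ u ∈ N, HasFDerivAt g' (g'' u) u)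
    (M : ℝ) (hM : 0 < M)
    (hbound : ∀ u ∈ N, ∀ v : U, g'' u v v ≤ M * ‖v‖ ^ 2)
    (A : U →L[ℝ] H)
    (hA : ∀ v : U, HasDerivAt (fun t : ℝ => F (ubar + t • v)) (A v) 0)
    (ω : U) (ξ : U →L[ℝ] ℝ) (hξω : ∀ v, ξ v = ⟪A ω, A v⟫)
    (hξ : IsSubgradientAt h ξ ubar) (hξg : ξ = g' ubar)
    (c ρ : ℝ) (hc : 0 < c) (hρ : 0 < ρ)
    (hcone : ∀ u ∈ DF, ‖u - ubar‖ < ρ →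
      ((‖F u - F ubar - A (u - ubar)‖ : ℝ) : EReal) ≤ ((c : ℝ) : EReal) * bregman h ξ u ubar)
    (hcω : c * ‖A ω‖ < 1)
    (α₁ : ℝ) (hα₁ : 0 < α₁)
    (hsmallω : ∀ α : ℝ, 0 < α → α ≤ α₁ →
      ubar - α • ω ∈ DF ∧ ‖(ubar - α • ω) - ubar‖ < ρ)
    (hsmallmin : ∀ α : ℝ, 0 < α → α ≤ α₁ → ∀ yδ : H, ∀ u ∈ DF,
      (∀ w ∈ DF,
        (((1 / 2) * ‖F u - yδ‖ ^ 2 : ℝ) : EReal) + ((α : ℝ) : EReal) * h u ≤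
        (((1 / 2) * ‖F w - yδ‖ ^ 2 : ℝ) : EReal) + ((α : ℝ) : EReal) * h w) →
      ‖u - ubar‖ < ρ) :
    (∃ C > (0 : ℝ), ∃ δ₀ > (0 : ℝ), ∀ δ : ℝ, 0 < δ → δ ≤ δ₀ →
      ∀ yδ : H, ‖y - yδ‖ ≤ δ →
      ∀ uαδ ∈ DF, (∀ u ∈ DF,
        (((1 / 2) * ‖F uαδ - yδ‖ ^ 2 : ℝ) : EReal)
            + ((δ ^ ((2 : ℝ) / 3) : ℝ) : EReal) * h uαδ ≤
        (((1 / 2) * ‖F u - yδ‖ ^ 2 : ℝ) : EReal)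
            + ((δ ^ ((2 : ℝ) / 3) : ℝ) : EReal) * h u) →
      bregman h ξ uαδ ubar ≤ ((C * δ ^ ((4 : ℝ) / 3) : ℝ) : EReal)) ∧
    (∃ C' > (0 : ℝ), ∃ α₀ > (0 : ℝ), ∀ α : ℝ, 0 < α → α ≤ α₀ →
      ∀ uα ∈ DF, (∀ u ∈ DF,
        (((1 / 2) * ‖F uα - y‖ ^ 2 : ℝ) : EReal) + ((α : ℝ) : EReal) * h uα ≤
        (((1 / 2) * ‖F u - y‖ ^ 2 : ℝ) : EReal) + ((α : ℝ) : EReal) * h u) →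
      bregman h ξ uα ubar ≤ ((C' * α ^ 2 : ℝ) : EReal)) := by
  obtain ⟨ε, hε, hball⟩ := Metric.isOpen_iff.mp hNopen ubar hubarN
  have ha0 : (0:ℝ) ≤ ‖A ω‖ := norm_nonneg _
  set a := ‖A ω‖ with ha
  clear_value a
  set β := 1 - c * a with hβdef
  clear_value β
  have hβ : 0 < β := by rw [hβdef]; linarith [hcω]
  set K := c * M * ‖ω‖ ^ 2 / 2 with hK
  clear_value K
  have hK0 : 0 ≤ K := by
    have h1 := mul_nonneg (mul_nonneg hc.le hM.le) (sq_nonneg ‖ω‖)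
    rw [hK]; linarith
  set C₂ := K * a + K ^ 2 / 2 + M * ‖ω‖ ^ 2 / 2 with hC₂
  clear_value C₂
  have hC₂0 : 0 ≤ C₂ := by
    have h1 := mul_nonneg hK0 ha0
    have h2 := sq_nonneg K
    have h3 := mul_nonneg hM.le (sq_nonneg ‖ω‖)
    rw [hC₂]; linarith
  have hω1 : (0:ℝ) < ‖ω‖ + 1 := by positivity
  set α₂ := min α₁ (min 1 (ε / (2 * (‖ω‖ + 1)))) with hα₂def
  clear_value α₂
  have hα₂pos : 0 < α₂ := by
    rw [hα₂def]
    exact lt_min hα₁ (lt_min one_pos (by positivity))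
  have key : ∀ α : ℝ, 0 < α → α ≤ α₂ → ∀ δ : ℝ, 0 ≤ δ → ∀ yδ : H, ‖y - yδ‖ ≤ δ →
      ∀ u ∈ DF, (∀ w ∈ DF,
        (((1 / 2) * ‖F u - yδ‖ ^ 2 : ℝ) : EReal) + ((α : ℝ) : EReal) * h u ≤
        (((1 / 2) * ‖F w - yδ‖ ^ 2 : ℝ) : EReal) + ((α : ℝ) : EReal) * h w) →
      bregman h ξ u ubar ≤
        (((δ ^ 2 / (2 * α) + K * α * δ + C₂ * α ^ 2) / β : ℝ) : EReal) := by
    intro α hα hαle δ hδ yδ hyδ u huD humin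
    rw [hα₂def] at hαle
    have hαα₁ : α ≤ α₁ := le_trans hαle (min_le_left _ _)
    have hα1 : α ≤ 1 := le_trans hαle (le_trans (min_le_right _ _) (min_le_left _ _))
    have hαε : α ≤ ε / (2 * (‖ω‖ + 1)) :=
      le_trans hαle (le_trans (min_le_right _ _) (min_le_right _ _))
    have hαω : α * ‖ω‖ < ε := by
      have h2 := (le_div_iff₀ (by positivity : (0:ℝ) < 2 * (‖ω‖ + 1))).mp hαε
      nlinarith [norm_nonneg ω]
    set v := ubar - α • ω with hv
    clear_value v
    have hvsub : v - ubar = -(α • ω) := by rw [hv]; abel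
    have hnv : ‖v - ubar‖ = α * ‖ω‖ := by
      rw [hvsub, norm_neg, norm_smul, Real.norm_eq_abs, abs_of_pos hα]
    have hvN : v ∈ N := hball (by rw [Metric.mem_ball, dist_eq_norm, hnv]; exact hαω)
    obtain ⟨hvD, hvρ⟩ := hsmallω α hα hαα₁
    rw [← hv] at hvD hvρ
    have hseg : ∀ s ∈ Set.Icc (0:ℝ) 1, ubar + s • (-(α • ω)) ∈ N := by
      intro s hs
      apply hball
      rw [Metric.mem_ball, dist_eq_norm]
      have hrw : ubar + s • (-(α • ω)) - ubar = s • (-(α • ω)) := by abel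
      rw [hrw, norm_smul, Real.norm_eq_abs, abs_of_nonneg hs.1, norm_neg, norm_smul,
        Real.norm_eq_abs, abs_of_pos hα]
      calc s * (α * ‖ω‖) ≤ 1 * (α * ‖ω‖) := by
            nlinarith [hs.2, mul_nonneg hα.le (norm_nonneg ω)]
        _ < ε := by rw [one_mul]; exact hαω
    have htaylor := taylor_aux g g' g'' N hg' hg'' M hbound ubar (-(α • ω)) hseg
    have hvx : ubar + -(α • ω) = v := by rw [hv]; abel
    rw [hvx] at htaylor
    have hξa : ξ ω = a ^ 2 := by rw [hξω, real_inner_self_eq_norm_sq, ha]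
    have hξv : ξ (v - ubar) = -(α * a ^ 2) := by
      rw [hvsub, map_neg, map_smul, smul_eq_mul, hξa]
    have hhu_ne_bot : h u ≠ ⊥ := hP.1 u
    have hvmin := humin v hvD
    rw [hgh v hvN] at hvmin
    have hhu_ne_top : h u ≠ ⊤ := by
      intro htop
      rw [htop, EReal.coe_mul_top_of_pos hα, EReal.coe_add_top,
        top_le_iff, ← EReal.coe_mul, ← EReal.coe_add] at hvmin
      exact EReal.coe_ne_top _ hvmin
    set r := (h u).toReal with hr
    have hur : h u = ((r : ℝ) : EReal) := (EReal.coe_toReal hhu_ne_top hhu_ne_bot).symm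
    clear_value r
    rw [hur, ← EReal.coe_mul, ← EReal.coe_mul, ← EReal.coe_add, ← EReal.coe_add,
      EReal.coe_le_coe_iff] at hvmin
    have hbr_u : bregman h ξ u ubar = ((r - g ubar - ξ (u - ubar) : ℝ) : EReal) := by
      rw [bregman, hur, hgh ubar hubarN]; norm_cast
    have hbr_v : bregman h ξ v ubar = ((g v - g ubar - ξ (v - ubar) : ℝ) : EReal) := by
      rw [bregman, hgh v hvN, hgh ubar hubarN]; norm_cast
    set D := r - g ubar - ξ (u - ubar) with hD
    clear_value D
    set Dv := g v - g ubar - ξ (v - ubar) with hDv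
    clear_value Dv
    have huρ := hsmallmin α hα hαα₁ yδ u huD humin
    have hconeu := hcone u huD huρ
    rw [hbr_u, ← EReal.coe_mul, EReal.coe_le_coe_iff] at hconeu
    have hconev := hcone v hvD hvρ
    rw [hbr_v, ← EReal.coe_mul, EReal.coe_le_coe_iff] at hconev
    have hDvle : Dv ≤ M / 2 * (α ^ 2 * ‖ω‖ ^ 2) := by
      have h1 : g' ubar (-(α • ω)) = ξ (v - ubar) := by rw [← hξg, hvsub]
      have h2 : ‖-(α • ω)‖ ^ 2 = α ^ 2 * ‖ω‖ ^ 2 := by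
        rw [norm_neg, norm_smul, Real.norm_eq_abs, mul_pow, sq_abs]
      rw [h1, h2] at htaylor
      rw [hDv]; linarith
    set ru := F u - F ubar - A (u - ubar) with hru
    clear_value ru
    set rv := F v - F ubar - A (v - ubar) with hrv
    clear_value rv
    set e := y - yδ with he
    clear_value e
    have hvec : A (u - ubar) = F u - yδ - ru - e := by rw [hru, he, hub]; abel
    have hAu : ξ (u - ubar) = ⟪A ω, F u - yδ⟫ - ⟪A ω, ru⟫ - ⟪A ω, e⟫ := by
      rw [hξω, hvec, inner_sub_right, inner_sub_right]
    have hAv : A (v - ubar) = -(α • (A ω)) := by rw [hvsub, map_neg, map_smul]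
    have hFv : F v - yδ = (-(α • (A ω)) + e) + rv := by rw [hrv, hAv, he, hub]; abel
    have hs : ‖F v - yδ‖ ^ 2
        = ‖-(α • (A ω)) + e‖ ^ 2 + 2 * ⟪-(α • (A ω)) + e, rv⟫ + ‖rv‖ ^ 2 := by
      rw [hFv, norm_add_sq_real]
    have hx1 : ‖-(α • (A ω)) + e‖ ^ 2 = α ^ 2 * a ^ 2 - 2 * (α * ⟪A ω, e⟫) + ‖e‖ ^ 2 := by
      rw [norm_add_sq_real, inner_neg_left, real_inner_smul_left, norm_neg, norm_smul,
        Real.norm_eq_abs, mul_pow, sq_abs, ← ha]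
      ring
    have hnx : ‖-(α • (A ω)) + e‖ ≤ α * a + δ := by
      have h1 := norm_add_le (-(α • (A ω))) e
      rw [norm_neg, norm_smul, Real.norm_eq_abs, abs_of_pos hα, ← ha] at h1
      linarith [hyδ]
    have hKα : K * α ^ 2 = c * (M / 2 * (α ^ 2 * ‖ω‖ ^ 2)) := by rw [hK]; ring
    have hrvK : ‖rv‖ ≤ K * α ^ 2 := by
      have h2 := mul_le_mul_of_nonneg_left hDvle hc.le
      linarith [hconev]
    have hcs1 : -(a * ‖F u - yδ‖) ≤ ⟪A ω, F u - yδ⟫ := by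
      have h1 := abs_real_inner_le_norm (A ω) (F u - yδ)
      rw [← ha] at h1
      have h2 := neg_abs_le ⟪A ω, F u - yδ⟫
      linarith
    have hcs2 : ⟪A ω, ru⟫ ≤ a * (c * D) := by
      have h1 := real_inner_le_norm (A ω) ru
      rw [← ha] at h1
      have h2 := mul_le_mul_of_nonneg_left hconeu ha0
      linarith
    have hcs3 : ⟪-(α • (A ω)) + e, rv⟫ ≤ (α * a + δ) * (K * α ^ 2) := by
      have h1 := real_inner_le_norm (-(α • (A ω)) + e) rv
      have h2 : ‖-(α • (A ω)) + e‖ * ‖rv‖ ≤ (α * a + δ) * (K * α ^ 2) :=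
        mul_le_mul hnx hrvK (norm_nonneg rv) (add_nonneg (mul_nonneg hα.le ha0) hδ)
      linarith
    have hrv2 : ‖rv‖ ^ 2 ≤ (K * α ^ 2) ^ 2 := pow_le_pow_left₀ (norm_nonneg rv) hrvK 2
    have he2 : ‖e‖ ^ 2 ≤ δ ^ 2 := pow_le_pow_left₀ (norm_nonneg e) hyδ 2
    have hgveq : g v = g ubar + ξ (v - ubar) + Dv := by rw [hDv]; ring
    have hreq : r = g ubar + ξ (u - ubar) + D := by rw [hD]; ring
    rw [hreq, hgveq, hAu, hξv, hs, hx1] at hvmin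
    have hC₂α : C₂ * α ^ 3
        = K * a * α ^ 3 + K ^ 2 / 2 * α ^ 3 + M * ‖ω‖ ^ 2 / 2 * α ^ 3 := by rw [hC₂]; ring
    have hα43 : 0 ≤ K ^ 2 * α ^ 3 * (1 - α) :=
      mul_nonneg (mul_nonneg (sq_nonneg K) (pow_nonneg hα.le 3)) (by linarith)
    have hmain : α * (β * D) ≤ 1 / 2 * δ ^ 2 + K * α ^ 2 * δ + C₂ * α ^ 3 := by
      have Pm1 := mul_le_mul_of_nonneg_left hcs1 hα.le
      have Pm2 := mul_le_mul_of_nonneg_left hcs2 hα.le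
      have Pm3 := mul_le_mul_of_nonneg_left hDvle hα.le
      have hsq := sq_nonneg (‖F u - yδ‖ - α * a)
      rw [hβdef]
      linarith [hvmin, Pm1, Pm2, Pm3, hsq, hcs3, hrv2, he2, hC₂α, hα43]
    have hane : α ≠ 0 := hα.ne'
    have hbne : β ≠ 0 := hβ.ne'
    have hXeq : (δ ^ 2 / (2 * α) + K * α * δ + C₂ * α ^ 2) / β
        = (1 / 2 * δ ^ 2 + K * α ^ 2 * δ + C₂ * α ^ 3) / (α * β) := by
      field_simp
    have hfinal : D ≤ (δ ^ 2 / (2 * α) + K * α * δ + C₂ * α ^ 2) / β := by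
      rw [hXeq, le_div_iff₀ (by positivity : (0:ℝ) < α * β)]
      linarith [hmain]
    rw [hbr_u]
    exact EReal.coe_le_coe_iff.mpr hfinal
  constructor
  · -- noisy data
    refine ⟨(1 / 2 + K + C₂) / β, div_pos (by linarith) hβ,
      min 1 (α₂ ^ ((3:ℝ) / 2)), lt_min one_pos (Real.rpow_pos_of_pos hα₂pos _), ?_⟩
    intro δ hδ hδle yδ hyδ u huD humin
    have hδ1 : δ ≤ 1 := le_trans hδle (min_le_left _ _)
    have hδα₂ : δ ^ ((2:ℝ) / 3) ≤ α₂ := by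
      have h1 : δ ≤ α₂ ^ ((3:ℝ) / 2) := le_trans hδle (min_le_right _ _)
      calc δ ^ ((2:ℝ) / 3) ≤ (α₂ ^ ((3:ℝ) / 2)) ^ ((2:ℝ) / 3) :=
            Real.rpow_le_rpow hδ.le h1 (by norm_num)
        _ = α₂ := by rw [← Real.rpow_mul hα₂pos.le]; norm_num
    have hαpos : 0 < δ ^ ((2:ℝ) / 3) := Real.rpow_pos_of_pos hδ _
    have hkey := key _ hαpos hδα₂ δ hδ.le yδ hyδ u huD humin
    refine le_trans hkey (EReal.coe_le_coe_iff.mpr ?_)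
    have hne : δ ^ ((2:ℝ) / 3) ≠ 0 := hαpos.ne'
    have f1 : δ ^ ((4:ℝ) / 3) * δ ^ ((2:ℝ) / 3) = δ ^ 2 := by
      rw [← Real.rpow_add hδ]
      norm_num
    have f2 : δ ^ ((2:ℝ) / 3) * δ = δ ^ ((5:ℝ) / 3) := by
      rw [show (5:ℝ) / 3 = (2:ℝ) / 3 + 1 by norm_num, Real.rpow_add hδ, Real.rpow_one]
    have f3 : δ ^ ((5:ℝ) / 3) ≤ δ ^ ((4:ℝ) / 3) :=
      Real.rpow_le_rpow_of_exponent_ge hδ hδ1 (by norm_num)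
    have f4 : (δ ^ ((2:ℝ) / 3)) ^ 2 = δ ^ ((4:ℝ) / 3) := by
      rw [← Real.rpow_natCast (δ ^ ((2:ℝ) / 3)) 2, ← Real.rpow_mul hδ.le]
      norm_num
    have hx1 : δ ^ 2 / (2 * δ ^ ((2:ℝ) / 3)) = δ ^ ((4:ℝ) / 3) / 2 := by
      rw [← f1]
      field_simp
    have f2K : K * δ ^ ((2:ℝ) / 3) * δ = K * δ ^ ((5:ℝ) / 3) := by rw [mul_assoc, f2]
    have f3K : K * δ ^ ((5:ℝ) / 3) ≤ K * δ ^ ((4:ℝ) / 3) :=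
      mul_le_mul_of_nonneg_left f3 hK0
    have hnum : δ ^ 2 / (2 * δ ^ ((2:ℝ) / 3)) + K * δ ^ ((2:ℝ) / 3) * δ
        + C₂ * (δ ^ ((2:ℝ) / 3)) ^ 2 ≤ (1 / 2 + K + C₂) * δ ^ ((4:ℝ) / 3) := by
      rw [hx1, f4, f2K]
      linarith [f3K]
    calc (δ ^ 2 / (2 * δ ^ ((2:ℝ) / 3)) + K * δ ^ ((2:ℝ) / 3) * δ
          + C₂ * (δ ^ ((2:ℝ) / 3)) ^ 2) / β
        ≤ ((1 / 2 + K + C₂) * δ ^ ((4:ℝ) / 3)) / β := by gcongr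
      _ = (1 / 2 + K + C₂) / β * δ ^ ((4:ℝ) / 3) := by ring
  · -- exact data
    refine ⟨(C₂ + 1) / β, div_pos (by linarith) hβ, α₂, hα₂pos, ?_⟩
    intro α hα hαle u huD humin
    have hy0 : ‖y - y‖ ≤ (0:ℝ) := by simp
    have hkey := key α hα hαle 0 le_rfl y hy0 u huD humin
    refine le_trans hkey (EReal.coe_le_coe_iff.mpr ?_)
    have h1 : (0:ℝ) ^ 2 / (2 * α) + K * α * 0 + C₂ * α ^ 2 = C₂ * α ^ 2 := by
      simp
    rw [h1, show (C₂ + 1) / β * α ^ 2 = ((C₂ + 1) * α ^ 2) / β from by ring]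
    gcongr
    linarith [sq_nonneg α]
end
end

section
/- Let U be a real Banach space, H a real Hilbert space, D(F) ⊆ U, F : D(F) → H a map, and h : U → ℝ ∪ {+∞} a proper convex functional. Let y^δ ∈ H, ū ∈ U with h(ū) < ∞, α_k > 0, u_k, u_{k+1} ∈ D(F), ξ_k ∈ ∂h(u_k), and let A : U → H be a bounded linear operator which is the Fréchet derivative of F at u_{k+1}. Define ξ_{k+1} = ξ_k − (1/α_k) A*(F(u_{k+1}) − y^δ), where A*w ∈ U* denotes v ↦ ⟨w, A v⟩, and assume ξ_{k+1} ∈ ∂h(u_{k+1}). If there is 0 < c < 1 with ‖y^δ − F(u_{k+1}) − A(ū − u_{k+1})‖ ≤ c ‖y^δ − F(u_{k+1})‖, then D_{ξ_{k+1}}(ū, u_{k+1}) − D_{ξ_k}(ū, u_k) + D_{ξ_k}(u_{k+1}, u_k) ≤ −((1 − c)/α_k) ‖y^δ − F(u_{k+1})‖². -/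
open scoped RealInnerProductSpace

noncomputable section

/-- monotonicity of the Bregman distance along the iterated
Tikhonov method with Bregman-distance penalty. -/
theorem iterated_tikhonov_bregman_monotone
    {U H : Type*} [NormedAddCommGroup U] [NormedSpace ℝ U] [CompleteSpace U]
    [NormedAddCommGroup H] [InnerProductSpace ℝ H] [CompleteSpace H]
    (DF : Set U) (F : U → H) (h : U → EReal) (hP : ProperConvex h)
    (yδ : H) (ubar : U) (hubar : h ubar ≠ ⊤)
    (αk : ℝ) (hαk : 0 < αk)
    (uk : U) (hukD : uk ∈ DF) (uk1 : U) (huk1D : uk1 ∈ DF)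
    (ξk : U →L[ℝ] ℝ) (hξk : IsSubgradientAt h ξk uk)
    (A : U →L[ℝ] H) (hA : HasFDerivAt F A uk1)
    (ξk1 : U →L[ℝ] ℝ)
    (hξk1def : ∀ v, ξk1 v = ξk v - (1 / αk) * ⟪F uk1 - yδ, A v⟫)
    (hξk1 : IsSubgradientAt h ξk1 uk1)
    (c : ℝ) (hc0 : 0 < c) (hc1 : c < 1)
    (hcone : ‖yδ - F uk1 - A (ubar - uk1)‖ ≤ c * ‖yδ - F uk1‖) :
    bregman h ξk1 ubar uk1 - bregman h ξk ubar uk + bregman h ξk uk1 uk ≤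
      ((-((1 - c) / αk) * ‖yδ - F uk1‖ ^ 2 : ℝ) : EReal) := by
  obtain ⟨hbot, -, -⟩ := hP
  -- finiteness
  have hk_top : h uk ≠ ⊤ := by
    intro htop
    have := hξk ubar
    rw [htop] at this
    simp [EReal.top_add_of_ne_bot] at this
    exact hubar (top_le_iff.mp this)
  have hk1_top : h uk1 ≠ ⊤ := by
    intro htop
    have := hξk1 ubar
    rw [htop] at this
    simp [EReal.top_add_of_ne_bot] at this
    exact hubar (top_le_iff.mp this)
  set a := (h ubar).toReal with ha
  set b := (h uk).toReal with hb
  set d := (h uk1).toReal with hd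
  have hau : h ubar = (a : EReal) := (EReal.coe_toReal hubar (hbot ubar)).symm
  have hbu : h uk = (b : EReal) := (EReal.coe_toReal hk_top (hbot uk)).symm
  have hdu : h uk1 = (d : EReal) := (EReal.coe_toReal hk1_top (hbot uk1)).symm
  rw [bregman, bregman, bregman, hau, hbu, hdu]
  rw [← EReal.coe_sub, ← EReal.coe_sub, ← EReal.coe_sub, ← EReal.coe_sub,
    ← EReal.coe_sub, ← EReal.coe_sub, ← EReal.coe_sub, ← EReal.coe_add]
  rw [EReal.coe_le_coe_iff]
  set r := yδ - F uk1 with hr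
  have hkey : ⟪F uk1 - yδ, A (ubar - uk1)⟫ ≤ -(1 - c) * ‖r‖ ^ 2 := by
    have h1 : ⟪r, A (ubar - uk1)⟫ = ‖r‖ ^ 2 - ⟪r, r - A (ubar - uk1)⟫ := by
      rw [inner_sub_right, real_inner_self_eq_norm_sq]; ring
    have h2 : ⟪r, r - A (ubar - uk1)⟫ ≤ ‖r‖ * (c * ‖r‖) := by
      calc ⟪r, r - A (ubar - uk1)⟫ ≤ ‖r‖ * ‖r - A (ubar - uk1)‖ :=
            real_inner_le_norm _ _
        _ ≤ ‖r‖ * (c * ‖r‖) := by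
            apply mul_le_mul_of_nonneg_left _ (norm_nonneg _)
            simpa [hr] using hcone
    have h3 : ⟪F uk1 - yδ, A (ubar - uk1)⟫ = -⟪r, A (ubar - uk1)⟫ := by
      rw [hr, ← inner_neg_left]; congr 1; abel
    rw [h3, h1]; nlinarith [sq_nonneg ‖r‖]
  have hξdiff : ξk1 (ubar - uk1) = ξk (ubar - uk1) - (1 / αk) * ⟪F uk1 - yδ, A (ubar - uk1)⟫ :=
    hξk1def _
  have hlin : ξk (ubar - uk) - ξk (uk1 - uk) = ξk (ubar - uk1) := by
    rw [← map_sub]; congr 1; abel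
  have hmul : (1 / αk) * ⟪F uk1 - yδ, A (ubar - uk1)⟫ ≤ (1 / αk) * (-(1 - c) * ‖r‖ ^ 2) :=
    mul_le_mul_of_nonneg_left hkey (by positivity)
  have : a - d - ξk1 (ubar - uk1) - (a - b - ξk (ubar - uk)) + (d - b - ξk (uk1 - uk))
      = (1 / αk) * ⟪F uk1 - yδ, A (ubar - uk1)⟫ := by
    rw [hξdiff]; nlinarith [hlin]
  rw [this]
  calc (1 / αk) * ⟪F uk1 - yδ, A (ubar - uk1)⟫ ≤ (1 / αk) * (-(1 - c) * ‖r‖ ^ 2) := hmul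
    _ = -((1 - c) / αk) * ‖r‖ ^ 2 := by field_simp
end
end
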